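/- arXiv:2506.22730 — 5 statements merged into one kernel-verified Lean document; each statement's English description precedes it below -/
import Mathlib

section
/- The kernel of φ is generated as an ideal by the set 𝒢 = 𝓜 ∪ 𝓝 ∪ 𝓡 ∪ 𝓣, where: 𝓜 = { X(i,j₂,k₁)X(i,j₁,k₂) − X(i,j₁,k₁)X(i,j₂,k₂) : 1≤i≤m, j₁<j₂, k₁<k₂ }; 𝓝 = { X(i₂,j,k₁)X(i₁,j,k₂) − X(i₁,j,k₁)X(i₂,j,k₂) : i₁<i₂, 1≤j≤n, k₁<k₂ }; 𝓡 = { X(i₁,j₂,k)X(i₂,j₁,k) − X(i₁,j₁,k)X(i₂,j₂,k) : i₁<i₂, j₁<j₂, 1≤k≤r }; and 𝓣 = { X(i₁,j₂,k₁)X(i₂,j₁,k₂) − X(i₁,j₁,k₁)X(i₂,j₂,k₂), X(i₂,j₁,k₁)X(i₁,j₂,k₂) − X(i₁,j₁,k₁)X(i₂,j₂,k₂), X(i₂,j₂,k₁)X(i₁,j₁,k₂) − X(i₁,j₁,k₁)X(i₂,j₂,k₂) : i₁<i₂, j₁<j₂, k₁<k₂ }. -/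
open MvPolynomial

/-- The toric map `φ` sending `X (i,j,k)` to `x_i y_j z_k`. -/
noncomputable def ddphi (K : Type*) [Field K] (m n r : ℕ) :
    MvPolynomial (Fin m × Fin n × Fin r) K →ₐ[K] MvPolynomial (Fin m ⊕ Fin n ⊕ Fin r) K :=
  MvPolynomial.aeval fun p =>
    X (Sum.inl p.1) * X (Sum.inr (Sum.inl p.2.1)) * X (Sum.inr (Sum.inr p.2.2))

/-- The set `𝓜`. -/
def setM (K : Type*) [Field K] (m n r : ℕ) :
    Set (MvPolynomial (Fin m × Fin n × Fin r) K) :=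
  {f | ∃ i : Fin m, ∃ j₁ j₂ : Fin n, ∃ k₁ k₂ : Fin r, j₁ < j₂ ∧ k₁ < k₂ ∧
        f = X (i, j₂, k₁) * X (i, j₁, k₂) - X (i, j₁, k₁) * X (i, j₂, k₂)}

/-- The set `𝓝`. -/
def setN (K : Type*) [Field K] (m n r : ℕ) :
    Set (MvPolynomial (Fin m × Fin n × Fin r) K) :=
  {f | ∃ i₁ i₂ : Fin m, ∃ j : Fin n, ∃ k₁ k₂ : Fin r, i₁ < i₂ ∧ k₁ < k₂ ∧
        f = X (i₂, j, k₁) * X (i₁, j, k₂) - X (i₁, j, k₁) * X (i₂, j, k₂)}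

/-- The set `𝓡`. -/
def setR (K : Type*) [Field K] (m n r : ℕ) :
    Set (MvPolynomial (Fin m × Fin n × Fin r) K) :=
  {f | ∃ i₁ i₂ : Fin m, ∃ j₁ j₂ : Fin n, ∃ k : Fin r, i₁ < i₂ ∧ j₁ < j₂ ∧
        f = X (i₁, j₂, k) * X (i₂, j₁, k) - X (i₁, j₁, k) * X (i₂, j₂, k)}

/-- The set `𝓣`. -/
def setT (K : Type*) [Field K] (m n r : ℕ) :
    Set (MvPolynomial (Fin m × Fin n × Fin r) K) :=
  {f | ∃ i₁ i₂ : Fin m, ∃ j₁ j₂ : Fin n, ∃ k₁ k₂ : Fin r, i₁ < i₂ ∧ j₁ < j₂ ∧ k₁ < k₂ ∧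
        (f = X (i₁, j₂, k₁) * X (i₂, j₁, k₂) - X (i₁, j₁, k₁) * X (i₂, j₂, k₂) ∨
         f = X (i₂, j₁, k₁) * X (i₁, j₂, k₂) - X (i₁, j₁, k₁) * X (i₂, j₂, k₂) ∨
         f = X (i₂, j₂, k₁) * X (i₁, j₁, k₂) - X (i₁, j₁, k₁) * X (i₂, j₂, k₂))}

namespace SegreAux

variable {K : Type*} [Field K] {m n r : ℕ}

/-- The span of the generating set. -/
noncomputable def gI (K : Type*) [Field K] (m n r : ℕ) :
    Ideal (MvPolynomial (Fin m × Fin n × Fin r) K) :=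
  Ideal.span (setM K m n r ∪ setN K m n r ∪ setR K m n r ∪ setT K m n r)

/-- Congruence modulo the ideal. -/
def ER (p q : MvPolynomial (Fin m × Fin n × Fin r) K) : Prop := p - q ∈ gI K m n r

lemma ER.of_eq {p q : MvPolynomial (Fin m × Fin n × Fin r) K} (h : p = q) : ER p q := by
  show p - q ∈ _
  rw [h, sub_self]; exact zero_mem _

lemma ER.refl (p : MvPolynomial (Fin m × Fin n × Fin r) K) : ER p p := ER.of_eq rfl

lemma ER.symm {p q : MvPolynomial (Fin m × Fin n × Fin r) K} (h : ER p q) : ER q p := by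
  have := neg_mem h
  rwa [neg_sub] at this

lemma ER.trans {p q s : MvPolynomial (Fin m × Fin n × Fin r) K}
    (h : ER p q) (h' : ER q s) : ER p s := by
  have := add_mem h h'
  rwa [sub_add_sub_cancel] at this

lemma ER.mul_right {p q : MvPolynomial (Fin m × Fin n × Fin r) K}
    (s : MvPolynomial (Fin m × Fin n × Fin r) K) (h : ER p q) : ER (p * s) (q * s) := by
  have := Ideal.mul_mem_right s _ h
  rwa [sub_mul] at this

lemma ER.mul_left {p q : MvPolynomial (Fin m × Fin n × Fin r) K}
    (s : MvPolynomial (Fin m × Fin n × Fin r) K) (h : ER p q) : ER (s * p) (s * q) := by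
  have := Ideal.mul_mem_left _ s h
  rwa [mul_sub] at this

lemma memM {f : MvPolynomial (Fin m × Fin n × Fin r) K} (h : f ∈ setM K m n r) :
    f ∈ gI K m n r := Ideal.subset_span (Or.inl (Or.inl (Or.inl h)))

lemma memN {f : MvPolynomial (Fin m × Fin n × Fin r) K} (h : f ∈ setN K m n r) :
    f ∈ gI K m n r := Ideal.subset_span (Or.inl (Or.inl (Or.inr h)))

lemma memR {f : MvPolynomial (Fin m × Fin n × Fin r) K} (h : f ∈ setR K m n r) :
    f ∈ gI K m n r := Ideal.subset_span (Or.inl (Or.inr h))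

lemma memT {f : MvPolynomial (Fin m × Fin n × Fin r) K} (h : f ∈ setT K m n r) :
    f ∈ gI K m n r := Ideal.subset_span (Or.inr h)

lemma sorted_aux (a b : Fin m) (c d : Fin n) (e f : Fin r) (hef : e ≤ f) :
    ER (K := K) (X (a,c,e) * X (b,d,f)) (X (a⊓b, c⊓d, e⊓f) * X (a⊔b, c⊔d, e⊔f)) := by
  rw [inf_eq_left.mpr hef, sup_eq_right.mpr hef]
  rcases eq_or_lt_of_le hef with rfl | hef
  · rcases lt_trichotomy a b with hab | rfl | hab <;>
      rcases lt_trichotomy c d with hcd | rfl | hcd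
    · rw [inf_eq_left.mpr hab.le, sup_eq_right.mpr hab.le,
        inf_eq_left.mpr hcd.le, sup_eq_right.mpr hcd.le]
      exact ER.refl _
    · rw [inf_eq_left.mpr hab.le, sup_eq_right.mpr hab.le, inf_idem, sup_idem]
      exact ER.refl _
    · rw [inf_eq_left.mpr hab.le, sup_eq_right.mpr hab.le,
        inf_eq_right.mpr hcd.le, sup_eq_left.mpr hcd.le]
      exact memR ⟨a, b, d, c, e, hab, hcd, by ring⟩
    · rw [inf_idem, sup_idem, inf_eq_left.mpr hcd.le, sup_eq_right.mpr hcd.le]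
      exact ER.refl _
    · rw [inf_idem, sup_idem, inf_idem, sup_idem]
      exact ER.refl _
    · rw [inf_idem, sup_idem, inf_eq_right.mpr hcd.le, sup_eq_left.mpr hcd.le]
      exact ER.of_eq (by ring)
    · rw [inf_eq_right.mpr hab.le, sup_eq_left.mpr hab.le,
        inf_eq_left.mpr hcd.le, sup_eq_right.mpr hcd.le]
      exact memR ⟨b, a, c, d, e, hab, hcd, by ring⟩
    · rw [inf_eq_right.mpr hab.le, sup_eq_left.mpr hab.le, inf_idem, sup_idem]
      exact ER.of_eq (by ring)
    · rw [inf_eq_right.mpr hab.le, sup_eq_left.mpr hab.le,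
        inf_eq_right.mpr hcd.le, sup_eq_left.mpr hcd.le]
      exact ER.of_eq (by ring)
  · rcases lt_trichotomy a b with hab | rfl | hab <;>
      rcases lt_trichotomy c d with hcd | rfl | hcd
    · rw [inf_eq_left.mpr hab.le, sup_eq_right.mpr hab.le,
        inf_eq_left.mpr hcd.le, sup_eq_right.mpr hcd.le]
      exact ER.refl _
    · rw [inf_eq_left.mpr hab.le, sup_eq_right.mpr hab.le, inf_idem, sup_idem]
      exact ER.refl _
    · rw [inf_eq_left.mpr hab.le, sup_eq_right.mpr hab.le,
        inf_eq_right.mpr hcd.le, sup_eq_left.mpr hcd.le]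
      exact memT ⟨a, b, d, c, e, f, hab, hcd, hef, Or.inl (by ring)⟩
    · rw [inf_idem, sup_idem, inf_eq_left.mpr hcd.le, sup_eq_right.mpr hcd.le]
      exact ER.refl _
    · rw [inf_idem, sup_idem, inf_idem, sup_idem]
      exact ER.refl _
    · rw [inf_idem, sup_idem, inf_eq_right.mpr hcd.le, sup_eq_left.mpr hcd.le]
      exact memM ⟨a, d, c, e, f, hcd, hef, by ring⟩
    · rw [inf_eq_right.mpr hab.le, sup_eq_left.mpr hab.le,
        inf_eq_left.mpr hcd.le, sup_eq_right.mpr hcd.le]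
      exact memT ⟨b, a, c, d, e, f, hab, hcd, hef, Or.inr (Or.inl (by ring))⟩
    · rw [inf_eq_right.mpr hab.le, sup_eq_left.mpr hab.le, inf_idem, sup_idem]
      exact memN ⟨b, a, c, e, f, hab, hef, by ring⟩
    · rw [inf_eq_right.mpr hab.le, sup_eq_left.mpr hab.le,
        inf_eq_right.mpr hcd.le, sup_eq_left.mpr hcd.le]
      exact memT ⟨b, a, d, c, e, f, hab, hcd, hef, Or.inr (Or.inr (by ring))⟩

lemma sorted_equiv (a b : Fin m) (c d : Fin n) (e f : Fin r) :
    ER (K := K) (X (a,c,e) * X (b,d,f)) (X (a⊓b, c⊓d, e⊓f) * X (a⊔b, c⊔d, e⊔f)) := by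
  rcases le_total e f with h | h
  · exact sorted_aux a b c d e f h
  · have := sorted_aux (K := K) b a d c f e h
    rw [inf_comm b a, inf_comm d c, inf_comm f e, sup_comm b a, sup_comm d c, sup_comm f e,
      mul_comm (X (b,d,f))] at this
    exact this

lemma swapJ (i i' : Fin m) (j j' : Fin n) (k k' : Fin r) :
    ER (K := K) (X (i,j,k) * X (i',j',k')) (X (i,j',k) * X (i',j,k')) := by
  have h1 := sorted_equiv (K := K) i i' j j' k k'
  have h2 := sorted_equiv (K := K) i i' j' j k k'
  rw [inf_comm j' j, sup_comm j' j] at h2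
  exact h1.trans h2.symm

lemma swapK (i i' : Fin m) (j j' : Fin n) (k k' : Fin r) :
    ER (K := K) (X (i,j,k) * X (i',j',k')) (X (i,j,k') * X (i',j',k)) := by
  have h1 := sorted_equiv (K := K) i i' j j' k k'
  have h2 := sorted_equiv (K := K) i i' j j' k' k
  rw [inf_comm k' k, sup_comm k' k] at h2
  exact h1.trans h2.symm

/-- Product of variables indexed by a multiset. -/
noncomputable def P (M : Multiset (Fin m × Fin n × Fin r)) : MvPolynomial (Fin m × Fin n × Fin r) K :=
  (M.map X).prod

lemma P_cons (t : Fin m × Fin n × Fin r) (M : Multiset (Fin m × Fin n × Fin r)) :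
    P (K := K) (t ::ₘ M) = X t * P M := by
  simp [P]

def rows (M : Multiset (Fin m × Fin n × Fin r)) : Multiset (Fin m) := M.map Prod.fst
def cols (M : Multiset (Fin m × Fin n × Fin r)) : Multiset (Fin n) := M.map fun t => t.2.1
def lays (M : Multiset (Fin m × Fin n × Fin r)) : Multiset (Fin r) := M.map fun t => t.2.2

@[simp] lemma rows_cons (t : Fin m × Fin n × Fin r) (M : Multiset (Fin m × Fin n × Fin r)) :
    rows (t ::ₘ M) = t.1 ::ₘ rows M := Multiset.map_cons _ _ _
@[simp] lemma cols_cons (t : Fin m × Fin n × Fin r) (M : Multiset (Fin m × Fin n × Fin r)) :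
    cols (t ::ₘ M) = t.2.1 ::ₘ cols M := Multiset.map_cons _ _ _
@[simp] lemma lays_cons (t : Fin m × Fin n × Fin r) (M : Multiset (Fin m × Fin n × Fin r)) :
    lays (t ::ₘ M) = t.2.2 ::ₘ lays M := Multiset.map_cons _ _ _

lemma pullCol (i : Fin m) (j₀ : Fin n) (k₀ : Fin r) (M₀ : Multiset (Fin m × Fin n × Fin r))
    (j : Fin n) (hj : j ∈ j₀ ::ₘ cols M₀) :
    ∃ k₀' M₀', ER (K := K) (P ((i,j₀,k₀) ::ₘ M₀)) (P ((i,j,k₀') ::ₘ M₀')) ∧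
      rows M₀' = rows M₀ ∧
      j ::ₘ cols M₀' = j₀ ::ₘ cols M₀ ∧
      k₀' ::ₘ lays M₀' = k₀ ::ₘ lays M₀ := by
  rcases Multiset.mem_cons.mp hj with rfl | hj
  · exact ⟨k₀, M₀, ER.refl _, rfl, rfl, rfl⟩
  · obtain ⟨t, ht, h2⟩ := Multiset.mem_map.mp hj
    obtain ⟨M₁, rfl⟩ := Multiset.exists_cons_of_mem ht
    obtain ⟨i₁, j', k₁⟩ := t
    cases h2
    refine ⟨k₀, (i₁, j₀, k₁) ::ₘ M₁, ?_, ?_, ?_, ?_⟩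
    · have := (swapJ (K := K) i i₁ j₀ j' k₀ k₁).mul_right (P M₁)
      rw [P_cons, P_cons, P_cons, P_cons]
      rw [← mul_assoc, ← mul_assoc]
      exact this
    · simp [rows]
    · simp only [cols, Multiset.map_cons]
      rw [Multiset.cons_swap]
    · simp [lays]

lemma pullLay (i : Fin m) (j : Fin n) (k₀ : Fin r) (M₀ : Multiset (Fin m × Fin n × Fin r))
    (k : Fin r) (hk : k ∈ k₀ ::ₘ lays M₀) :
    ∃ M₀', ER (K := K) (P ((i,j,k₀) ::ₘ M₀)) (P ((i,j,k) ::ₘ M₀')) ∧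
      rows M₀' = rows M₀ ∧
      cols M₀' = cols M₀ ∧
      k ::ₘ lays M₀' = k₀ ::ₘ lays M₀ := by
  rcases Multiset.mem_cons.mp hk with rfl | hk
  · exact ⟨M₀, ER.refl _, rfl, rfl, rfl⟩
  · obtain ⟨t, ht, h2⟩ := Multiset.mem_map.mp hk
    obtain ⟨M₁, rfl⟩ := Multiset.exists_cons_of_mem ht
    obtain ⟨i₁, j₁, k'⟩ := t
    cases h2
    refine ⟨(i₁, j₁, k₀) ::ₘ M₁, ?_, ?_, ?_, ?_⟩
    · have := (swapK (K := K) i i₁ j j₁ k₀ k').mul_right (P M₁)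
      rw [P_cons, P_cons, P_cons, P_cons]
      rw [← mul_assoc, ← mul_assoc]
      exact this
    · simp [rows]
    · simp [cols]
    · simp only [lays, Multiset.map_cons]
      rw [Multiset.cons_swap]

lemma gather (M : Multiset (Fin m × Fin n × Fin r)) (i : Fin m) (j : Fin n) (k : Fin r)
    (hi : i ∈ rows M) (hj : j ∈ cols M) (hk : k ∈ lays M) :
    ∃ M', ER (K := K) (P M) (P ((i,j,k) ::ₘ M')) ∧
      rows M' = (rows M).erase i ∧ cols M' = (cols M).erase j ∧
      lays M' = (lays M).erase k := by
  obtain ⟨t, ht, h⟩ := Multiset.mem_map.mp hi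
  obtain ⟨M₀, rfl⟩ := Multiset.exists_cons_of_mem ht
  obtain ⟨i', j₀, k₀⟩ := t
  cases h
  have hj' : j ∈ j₀ ::ₘ cols M₀ := by
    simp only [cols_cons] at hj; exact hj
  obtain ⟨k₀', M₀', h1, hr, hc, hl⟩ := pullCol (K := K) i' j₀ k₀ M₀ j hj'
  have hk' : k ∈ k₀' ::ₘ lays M₀' := by
    rw [hl]
    simp only [lays_cons] at hk; exact hk
  obtain ⟨M₁, h2, hr2, hc2, hl2⟩ := pullLay (K := K) i' j k₀' M₀' k hk'
  refine ⟨M₁, h1.trans h2, ?_, ?_, ?_⟩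
  · rw [hr2, hr, rows_cons, Multiset.erase_cons_head]
  · rw [hc2, cols_cons, ← hc, Multiset.erase_cons_head]
  · rw [lays_cons, ← hl, ← hl2, Multiset.erase_cons_head]

lemma conn : ∀ (N : ℕ) (M₁ M₂ : Multiset (Fin m × Fin n × Fin r)), Multiset.card M₁ = N →
    rows M₁ = rows M₂ → cols M₁ = cols M₂ → lays M₁ = lays M₂ →
    ER (K := K) (P M₁) (P M₂) := by
  intro N
  induction N with
  | zero =>
    intro M₁ M₂ hc hr _ _
    have h1 : M₁ = 0 := Multiset.card_eq_zero.mp hc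
    subst h1
    have h2 : M₂ = 0 := by
      have : rows M₂ = 0 := by rw [← hr]; rfl
      simpa [rows] using this
    rw [h2]
    exact ER.refl _
  | succ N ih =>
    intro M₁ M₂ hc hr hcc hl
    obtain ⟨t, ht⟩ : ∃ t, t ∈ M₁ := Multiset.card_pos_iff_exists_mem.mp (by omega)
    obtain ⟨i, j, k⟩ := t
    have hi : i ∈ rows M₂ := hr ▸ Multiset.mem_map_of_mem _ ht
    have hj : j ∈ cols M₂ := hcc ▸ Multiset.mem_map_of_mem _ ht
    have hk : k ∈ lays M₂ := hl ▸ Multiset.mem_map_of_mem _ ht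
    obtain ⟨M₂', h1, hr', hc', hl'⟩ := gather (K := K) M₂ i j k hi hj hk
    obtain ⟨M₁', rfl⟩ := Multiset.exists_cons_of_mem ht
    have hcard : Multiset.card M₁' = N := by
      have := hc; simp at this; omega
    have e1 : rows M₁' = rows M₂' := by
      rw [hr', ← hr, rows_cons, Multiset.erase_cons_head]
    have e2 : cols M₁' = cols M₂' := by
      rw [hc', ← hcc, cols_cons, Multiset.erase_cons_head]
    have e3 : lays M₁' = lays M₂' := by
      rw [hl', ← hl, lays_cons, Multiset.erase_cons_head]
    have := (ih M₁' M₂' hcard e1 e2 e3).mul_left (X (i,j,k))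
    rw [← P_cons, ← P_cons] at this
    exact this.trans h1.symm

/-- The marginal multiset in the target variables. -/
def msum (M : Multiset (Fin m × Fin n × Fin r)) : Multiset (Fin m ⊕ Fin n ⊕ Fin r) :=
  M.map (fun t => Sum.inl t.1) + M.map (fun t => Sum.inr (Sum.inl t.2.1)) +
    M.map (fun t => Sum.inr (Sum.inr t.2.2))

lemma phi_P (M : Multiset (Fin m × Fin n × Fin r)) :
    ddphi K m n r (P M) = ((msum M).map X).prod := by
  induction M using Multiset.induction with
  | empty => simp [P, msum]
  | cons t M ih =>
    rw [P_cons, map_mul, ih]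
    have hx : ddphi K m n r (X t) =
        X (Sum.inl t.1) * X (Sum.inr (Sum.inl t.2.1)) * X (Sum.inr (Sum.inr t.2.2)) := by
      simp [ddphi]
    rw [hx]
    simp only [msum, Multiset.map_cons, Multiset.map_add, Multiset.prod_add, Multiset.prod_cons]
    ring

lemma genMon {α : Type*} (f : α →₀ ℕ) :
    ((Finsupp.toMultiset f).map (X : α → MvPolynomial α K)).prod = monomial f 1 := by
  induction f using Finsupp.induction with
  | zero => simp
  | single_add a b f _ _ ih =>
    rw [Finsupp.toMultiset_add, Multiset.map_add, Multiset.prod_add, ih, monomial_single_add,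
      Finsupp.toMultiset_single]
    congr 1
    simp [Multiset.nsmul_singleton, Multiset.map_replicate, Multiset.prod_replicate]

lemma Qmon {α : Type*} [DecidableEq α] (N : Multiset α) :
    (N.map (X : α → MvPolynomial α K)).prod = monomial (Multiset.toFinsupp N) 1 := by
  conv_lhs => rw [← Multiset.toFinsupp_toMultiset N]
  exact genMon _

lemma filterMap_add' {α β : Type*} (f : α → Option β) (s t : Multiset α) :
    (s + t).filterMap f = s.filterMap f + t.filterMap f := by
  induction s using Multiset.induction with
  | empty => simp
  | cons a s ih =>
    rcases h : f a with _ | b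
    · rw [Multiset.cons_add, Multiset.filterMap_cons_none _ _ h,
        Multiset.filterMap_cons_none _ _ h, ih]
    · rw [Multiset.cons_add, Multiset.filterMap_cons_some _ _ _ h,
        Multiset.filterMap_cons_some _ _ _ h, ih, Multiset.cons_add]

lemma filterMap_const_none {α β : Type*} (s : Multiset α) :
    s.filterMap (fun _ => (none : Option β)) = 0 := by
  induction s using Multiset.induction with
  | empty => simp
  | cons a s ih => rw [Multiset.filterMap_cons_none _ _ rfl, ih]

def e1 : Fin m ⊕ Fin n ⊕ Fin r → Option (Fin m)
  | .inl i => some i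
  | _ => none

def e2 : Fin m ⊕ Fin n ⊕ Fin r → Option (Fin n)
  | .inr (.inl j) => some j
  | _ => none

def e3 : Fin m ⊕ Fin n ⊕ Fin r → Option (Fin r)
  | .inr (.inr k) => some k
  | _ => none

lemma msum_rows (M : Multiset (Fin m × Fin n × Fin r)) :
    (msum M).filterMap e1 = rows M := by
  unfold msum
  rw [filterMap_add', filterMap_add', Multiset.filterMap_map, Multiset.filterMap_map,
    Multiset.filterMap_map]
  have h1 : (e1 ∘ fun t : Fin m × Fin n × Fin r => (Sum.inl t.1 : Fin m ⊕ Fin n ⊕ Fin r)) =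
      some ∘ Prod.fst := funext fun t => rfl
  have h2 : (e1 ∘ fun t : Fin m × Fin n × Fin r =>
      (Sum.inr (Sum.inl t.2.1) : Fin m ⊕ Fin n ⊕ Fin r)) = fun _ => none := funext fun t => rfl
  have h3 : (e1 ∘ fun t : Fin m × Fin n × Fin r =>
      (Sum.inr (Sum.inr t.2.2) : Fin m ⊕ Fin n ⊕ Fin r)) = fun _ => none := funext fun t => rfl
  rw [h1, h2, h3, Multiset.filterMap_eq_map, filterMap_const_none]
  simp [rows]

lemma msum_cols (M : Multiset (Fin m × Fin n × Fin r)) :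
    (msum M).filterMap e2 = cols M := by
  unfold msum
  rw [filterMap_add', filterMap_add', Multiset.filterMap_map, Multiset.filterMap_map,
    Multiset.filterMap_map]
  have h1 : (e2 ∘ fun t : Fin m × Fin n × Fin r => (Sum.inl t.1 : Fin m ⊕ Fin n ⊕ Fin r)) =
      fun _ => none := funext fun t => rfl
  have h2 : (e2 ∘ fun t : Fin m × Fin n × Fin r =>
      (Sum.inr (Sum.inl t.2.1) : Fin m ⊕ Fin n ⊕ Fin r)) = some ∘ fun t => t.2.1 :=
    funext fun t => rfl
  have h3 : (e2 ∘ fun t : Fin m × Fin n × Fin r =>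
      (Sum.inr (Sum.inr t.2.2) : Fin m ⊕ Fin n ⊕ Fin r)) = fun _ => none := funext fun t => rfl
  rw [h1, h2, h3, Multiset.filterMap_eq_map, filterMap_const_none]
  simp [cols]

lemma msum_lays (M : Multiset (Fin m × Fin n × Fin r)) :
    (msum M).filterMap e3 = lays M := by
  unfold msum
  rw [filterMap_add', filterMap_add', Multiset.filterMap_map, Multiset.filterMap_map,
    Multiset.filterMap_map]
  have h1 : (e3 ∘ fun t : Fin m × Fin n × Fin r => (Sum.inl t.1 : Fin m ⊕ Fin n ⊕ Fin r)) =
      fun _ => none := funext fun t => rfl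
  have h2 : (e3 ∘ fun t : Fin m × Fin n × Fin r =>
      (Sum.inr (Sum.inl t.2.1) : Fin m ⊕ Fin n ⊕ Fin r)) = fun _ => none := funext fun t => rfl
  have h3 : (e3 ∘ fun t : Fin m × Fin n × Fin r =>
      (Sum.inr (Sum.inr t.2.2) : Fin m ⊕ Fin n ⊕ Fin r)) = some ∘ fun t => t.2.2 :=
    funext fun t => rfl
  rw [h1, h2, h3, Multiset.filterMap_eq_map, filterMap_const_none]
  simp [lays]

lemma binomM {M₁ M₂ : Multiset (Fin m × Fin n × Fin r)} (h : msum M₁ = msum M₂) :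
    ER (K := K) (P M₁) (P M₂) := by
  refine conn (Multiset.card M₁) M₁ M₂ rfl ?_ ?_ ?_
  · rw [← msum_rows, ← msum_rows, h]
  · rw [← msum_cols, ← msum_cols, h]
  · rw [← msum_lays, ← msum_lays, h]

/-- The marginal exponent of a monomial exponent. -/
noncomputable def mg (a : (Fin m × Fin n × Fin r) →₀ ℕ) : (Fin m ⊕ Fin n ⊕ Fin r) →₀ ℕ :=
  Multiset.toFinsupp (msum (Finsupp.toMultiset a))

lemma P_toMultiset (a : (Fin m × Fin n × Fin r) →₀ ℕ) :
    P (Finsupp.toMultiset a) = monomial a (1 : K) := genMon a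

lemma phi_monomial (a : (Fin m × Fin n × Fin r) →₀ ℕ) (c : K) :
    ddphi K m n r (monomial a c) = monomial (mg a) c := by
  have h1 : monomial a c = C c * P (Finsupp.toMultiset a) := by
    rw [P_toMultiset, C_mul_monomial, mul_one]
  have h2 : ddphi K m n r (C c) = C c := by
    simp [ddphi, aeval_C, algebraMap_eq]
  rw [h1, map_mul, phi_P, Qmon, h2, C_mul_monomial, mul_one, mg]

lemma binomF {a b : (Fin m × Fin n × Fin r) →₀ ℕ} (h : mg a = mg b) :
    (monomial a (1 : K)) - monomial b 1 ∈ gI K m n r := by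
  have hm : msum (Finsupp.toMultiset a) = msum (Finsupp.toMultiset b) :=
    Multiset.toFinsupp.injective h
  have := binomM (K := K) hm
  rw [P_toMultiset, P_toMultiset] at this
  exact this

lemma ker_sub : ∀ (N : ℕ) (f : MvPolynomial (Fin m × Fin n × Fin r) K),
    f.support.card ≤ N → ddphi K m n r f = 0 → f ∈ gI K m n r := by
  intro N
  induction N with
  | zero =>
    intro f hc _
    have h0 : f = 0 := by
      have := Finset.card_eq_zero.mp (Nat.le_zero.mp hc)
      rwa [MvPolynomial.support_eq_empty] at this
    rw [h0]; exact zero_mem _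
  | succ N ih =>
    intro f hc hf0
    by_cases hf : f = 0
    · rw [hf]; exact zero_mem _
    obtain ⟨a, ha'⟩ := (Finset.nonempty_iff_ne_empty (s := f.support)).mpr (by rwa [Ne, MvPolynomial.support_eq_empty])
    have ha : a ∈ f.support := ha' 
    set T := f.support.filter (fun b => mg b = mg a) with hT
    have haT : a ∈ T := Finset.mem_filter.mpr ⟨ha, rfl⟩
    have hsum0 : ∑ b ∈ T, coeff b f = 0 := by
      have h1 : coeff (mg a) (ddphi K m n r f) =
          ∑ b ∈ f.support, (if mg b = mg a then coeff b f else 0) := by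
        conv_lhs => rw [← support_sum_monomial_coeff f]
        rw [map_sum, coeff_sum]
        refine Finset.sum_congr rfl fun b _ => ?_
        rw [phi_monomial, coeff_monomial]
      rw [hf0, coeff_zero] at h1
      rw [hT, Finset.sum_filter]
      exact h1.symm
    set g := ∑ b ∈ T, monomial b (coeff b f) with hg
    have expand : ∀ b, C (coeff b f) * ((monomial b (1:K)) - monomial a 1) =
        monomial b (coeff b f) - monomial a (coeff b f) := by
      intro b
      rw [mul_sub, C_mul_monomial, C_mul_monomial, mul_one]
    have hg2 : ∑ b ∈ T, C (coeff b f) * (monomial b 1 - monomial a 1) = g := by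
      simp only [expand]
      rw [Finset.sum_sub_distrib, ← map_sum, hsum0, map_zero, sub_zero, hg]
    have hgI : g ∈ gI K m n r := by
      rw [← hg2]
      refine Ideal.sum_mem _ fun b hb => ?_
      exact Ideal.mul_mem_left _ _ (binomF (Finset.mem_filter.mp hb).2)
    have hphig : ddphi K m n r g = 0 := by
      rw [hg, map_sum]
      have hcongr : ∀ b ∈ T, ddphi K m n r (monomial b (coeff b f)) =
          monomial (mg a) (coeff b f) := fun b hb => by
        rw [phi_monomial, (Finset.mem_filter.mp hb).2]
      rw [Finset.sum_congr rfl hcongr, ← map_sum, hsum0, map_zero]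
    have hbg : ∀ b, coeff b g = if b ∈ T then coeff b f else 0 := by
      intro b
      rw [hg, coeff_sum]
      simp only [coeff_monomial]
      exact Finset.sum_ite_eq' T b _
    have hsub : (f - g).support ⊆ f.support.erase a := by
      intro b hb
      rw [MvPolynomial.mem_support_iff, MvPolynomial.coeff_sub, hbg] at hb
      by_cases hbT : b ∈ T
      · rw [if_pos hbT, sub_self] at hb
        exact absurd rfl hb
      · rw [if_neg hbT, sub_zero] at hb
        refine Finset.mem_erase.mpr ⟨?_, MvPolynomial.mem_support_iff.mpr hb⟩
        rintro rfl
        exact hbT haT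
    have hcard2 : (f - g).support.card ≤ N := by
      refine le_trans (Finset.card_le_card hsub) ?_
      rw [Finset.card_erase_of_mem ha]
      omega
    have hphifg : ddphi K m n r (f - g) = 0 := by
      rw [map_sub, hf0, hphig, sub_zero]
    have hmem := ih (f - g) hcard2 hphifg
    have hfeq : f = (f - g) + g := (sub_add_cancel f g).symm
    rw [hfeq]
    exact add_mem hmem hgI

end SegreAux

theorem stmt_1 (K : Type*) [Field K] (m n r : ℕ) (hm : 0 < m) (hn : 0 < n) (hr : 0 < r) :
    RingHom.ker (ddphi K m n r) =
      Ideal.span (setM K m n r ∪ setN K m n r ∪ setR K m n r ∪ setT K m n r) := by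
  refine le_antisymm ?_ ?_
  · intro f hf
    exact SegreAux.ker_sub f.support.card f le_rfl (RingHom.mem_ker.mp hf)
  · rw [Ideal.span_le]
    rintro g hg
    simp only [SetLike.mem_coe, RingHom.mem_ker]
    rcases hg with ((hg | hg) | hg) | hg
    · obtain ⟨i, j₁, j₂, k₁, k₂, _, _, rfl⟩ := hg
      simp only [map_sub, map_mul, ddphi, aeval_X]
      ring
    · obtain ⟨i₁, i₂, j, k₁, k₂, _, _, rfl⟩ := hg
      simp only [map_sub, map_mul, ddphi, aeval_X]
      ring
    · obtain ⟨i₁, i₂, j₁, j₂, k, _, _, rfl⟩ := hg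
      simp only [map_sub, map_mul, ddphi, aeval_X]
      ring
    · obtain ⟨i₁, i₂, j₁, j₂, k₁, k₂, _, _, _, (rfl | rfl | rfl)⟩ := hg <;>
        · simp only [map_sub, map_mul, ddphi, aeval_X]
          ring
end

section
/- The double determinantal ideal equals the toric kernel: I(m,n,r) = ker φ. -/
open MvPolynomial

/-- The generators of the double determinantal ideal `I(m,n,r)` (2-minors of the
horizontal and vertical concatenations of the generic matrices `X_1, …, X_r`). -/
def ddGens (K : Type*) [Field K] (m n r : ℕ) :
    Set (MvPolynomial (Fin m × Fin n × Fin r) K) :=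
  {f | (∃ i i' : Fin m, ∃ j j' : Fin n, ∃ k : Fin r, i < i' ∧ j < j' ∧
          f = X (i, j, k) * X (i', j', k) - X (i, j', k) * X (i', j, k)) ∨
       (∃ i i' : Fin m, ∃ j j' : Fin n, ∃ k k' : Fin r, i < i' ∧ k < k' ∧
          f = X (i, j, k) * X (i', j', k') - X (i, j', k') * X (i', j, k)) ∨
       (∃ i i' : Fin m, ∃ j j' : Fin n, ∃ k k' : Fin r, j < j' ∧ k < k' ∧
          f = X (i, j, k) * X (i', j', k') - X (i, j', k) * X (i', j, k'))}

/-- The double determinantal ideal `I(m,n,r)`. -/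
noncomputable def ddIdeal (K : Type*) [Field K] (m n r : ℕ) :
    Ideal (MvPolynomial (Fin m × Fin n × Fin r) K) :=
  Ideal.span (ddGens K m n r)

section aux
variable {K : Type*} [Field K] {m n r : ℕ}

/-- swap the (j,k)-pair between the two factors (equivalently, swap the i's) -/
lemma memP (i i' : Fin m) (j j' : Fin n) (k k' : Fin r) :
    X (i, j, k) * X (i', j', k') - X (i, j', k') * X (i', j, k) ∈ ddIdeal K m n r := by
  -- wlog i ≤ i'
  have main : ∀ (i i' : Fin m) (j j' : Fin n) (k k' : Fin r), i ≤ i' →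
      X (i, j, k) * X (i', j', k') - X (i, j', k') * X (i', j, k) ∈ ddIdeal K m n r := by
    intro i i' j j' k k' h
    rcases eq_or_lt_of_le h with rfl | hi
    · have : X (i, j, k) * X (i, j', k') - X (i, j', k') * X (i, j, k)
          = (0 : MvPolynomial (Fin m × Fin n × Fin r) K) := by ring
      rw [this]; exact zero_mem _
    rcases lt_trichotomy k k' with hk | rfl | hk
    · exact Ideal.subset_span (Or.inr (Or.inl ⟨i, i', j, j', k, k', hi, hk, rfl⟩))
    · rcases lt_trichotomy j j' with hj | rfl | hj
      · exact Ideal.subset_span (Or.inl ⟨i, i', j, j', k, hi, hj, rfl⟩)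
      · have : X (i, j, k) * X (i', j, k) - X (i, j, k) * X (i', j, k)
            = (0 : MvPolynomial (Fin m × Fin n × Fin r) K) := by ring
        rw [this]; exact zero_mem _
      · have h2 : (X (i, j', k) * X (i', j, k) - X (i, j, k) * X (i', j', k)
            : MvPolynomial (Fin m × Fin n × Fin r) K) ∈ ddIdeal K m n r := Ideal.subset_span (Or.inl ⟨i, i', j', j, k, hi, hj, rfl⟩)
        have : (X (i, j, k) * X (i', j', k) - X (i, j', k) * X (i', j, k)
            : MvPolynomial (Fin m × Fin n × Fin r) K)
            = -(X (i, j', k) * X (i', j, k) - X (i, j, k) * X (i', j', k)) := by ring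
        rw [this]; exact neg_mem h2
    · have h2 : (X (i, j', k') * X (i', j, k) - X (i, j, k) * X (i', j', k')
          : MvPolynomial (Fin m × Fin n × Fin r) K) ∈ ddIdeal K m n r :=
        Ideal.subset_span (Or.inr (Or.inl ⟨i, i', j', j, k', k, hi, hk, rfl⟩))
      have : (X (i, j, k) * X (i', j', k') - X (i, j', k') * X (i', j, k)
          : MvPolynomial (Fin m × Fin n × Fin r) K) = -(X (i, j', k') * X (i', j, k) - X (i, j, k) * X (i', j', k')) := by ring
      rw [this]; exact neg_mem h2
  rcases le_total i i' with h | h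
  · exact main i i' j j' k k' h
  · have h2 := main i' i j' j k' k h
    have : (X (i, j, k) * X (i', j', k') - X (i, j', k') * X (i', j, k)
        : MvPolynomial (Fin m × Fin n × Fin r) K)
        = X (i', j', k') * X (i, j, k) - X (i', j, k) * X (i, j', k') := by ring
    rw [this]; exact h2

/-- swap the j's between the two factors -/
lemma memQ (i i' : Fin m) (j j' : Fin n) (k k' : Fin r) :
    X (i, j, k) * X (i', j', k') - X (i, j', k) * X (i', j, k') ∈ ddIdeal K m n r := by
  have main : ∀ (i i' : Fin m) (j j' : Fin n) (k k' : Fin r), j ≤ j' →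
      X (i, j, k) * X (i', j', k') - X (i, j', k) * X (i', j, k') ∈ ddIdeal K m n r := by
    intro i i' j j' k k' h
    rcases eq_or_lt_of_le h with rfl | hj
    · have : X (i, j, k) * X (i', j, k') - X (i, j, k) * X (i', j, k')
          = (0 : MvPolynomial (Fin m × Fin n × Fin r) K) := by ring
      rw [this]; exact zero_mem _
    rcases lt_trichotomy k k' with hk | rfl | hk
    · exact Ideal.subset_span (Or.inr (Or.inr ⟨i, i', j, j', k, k', hj, hk, rfl⟩))
    · rcases lt_trichotomy i i' with hi | rfl | hi
      · exact Ideal.subset_span (Or.inl ⟨i, i', j, j', k, hi, hj, rfl⟩)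
      · have : X (i, j, k) * X (i, j', k) - X (i, j', k) * X (i, j, k)
            = (0 : MvPolynomial (Fin m × Fin n × Fin r) K) := by ring
        rw [this]; exact zero_mem _
      · have h2 : (X (i', j, k) * X (i, j', k) - X (i', j', k) * X (i, j, k)
            : MvPolynomial (Fin m × Fin n × Fin r) K) ∈ ddIdeal K m n r := Ideal.subset_span (Or.inl ⟨i', i, j, j', k, hi, hj, rfl⟩)
        have : (X (i, j, k) * X (i', j', k) - X (i, j', k) * X (i', j, k)
            : MvPolynomial (Fin m × Fin n × Fin r) K)
            = -(X (i', j, k) * X (i, j', k) - X (i', j', k) * X (i, j, k)) := by ring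
        rw [this]; exact neg_mem h2
    · have h2 : (X (i', j, k') * X (i, j', k) - X (i', j', k') * X (i, j, k)
          : MvPolynomial (Fin m × Fin n × Fin r) K) ∈ ddIdeal K m n r :=
        Ideal.subset_span (Or.inr (Or.inr ⟨i', i, j, j', k', k, hj, hk, rfl⟩))
      have : (X (i, j, k) * X (i', j', k') - X (i, j', k) * X (i', j, k')
          : MvPolynomial (Fin m × Fin n × Fin r) K) = -(X (i', j, k') * X (i, j', k) - X (i', j', k') * X (i, j, k)) := by ring
      rw [this]; exact neg_mem h2
  rcases le_total j j' with h | h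
  · exact main i i' j j' k k' h
  · have h2 := main i' i j' j k' k h
    have : (X (i, j, k) * X (i', j', k') - X (i, j', k) * X (i', j, k')
        : MvPolynomial (Fin m × Fin n × Fin r) K)
        = X (i', j', k') * X (i, j, k) - X (i', j, k') * X (i, j', k) := by ring
    rw [this]; exact h2

/-- swap the k's between the two factors -/
lemma memR (i i' : Fin m) (j j' : Fin n) (k k' : Fin r) :
    X (i, j, k) * X (i', j', k') - X (i, j, k') * X (i', j', k) ∈ ddIdeal K m n r := by
  have h1 := memP (K := K) i i' j j' k k'
  have h2 := memQ (K := K) i i' j' j k' k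
  have : (X (i, j, k) * X (i', j', k') - X (i, j, k') * X (i', j', k)
      : MvPolynomial (Fin m × Fin n × Fin r) K)
      = (X (i, j, k) * X (i', j', k') - X (i, j', k') * X (i', j, k))
        + (X (i, j', k') * X (i', j, k) - X (i, j, k') * X (i', j', k)) := by ring
  rw [this]; exact add_mem h1 h2


lemma memSwapI (i i' : Fin m) (j j' : Fin n) (k k' : Fin r) :
    X (i, j, k) * X (i', j', k') - X (i ⊓ i', j, k) * X (i ⊔ i', j', k')
      ∈ ddIdeal K m n r := by
  rcases le_total i i' with h | h
  · rw [inf_eq_left.mpr h, sup_eq_right.mpr h, sub_self]; exact zero_mem _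
  · rw [inf_eq_right.mpr h, sup_eq_left.mpr h]
    have h2 := memP (K := K) i i' j j' k k'
    have : (X (i, j, k) * X (i', j', k') - X (i', j, k) * X (i, j', k')
        : MvPolynomial (Fin m × Fin n × Fin r) K)
        = X (i, j, k) * X (i', j', k') - X (i, j', k') * X (i', j, k) := by ring
    rw [this]; exact h2

lemma memSwapJ (i i' : Fin m) (j j' : Fin n) (k k' : Fin r) :
    X (i, j, k) * X (i', j', k') - X (i, j ⊓ j', k) * X (i', j ⊔ j', k')
      ∈ ddIdeal K m n r := by
  rcases le_total j j' with h | h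
  · rw [inf_eq_left.mpr h, sup_eq_right.mpr h, sub_self]; exact zero_mem _
  · rw [inf_eq_right.mpr h, sup_eq_left.mpr h]; exact memQ i i' j j' k k'

lemma memSwapK (i i' : Fin m) (j j' : Fin n) (k k' : Fin r) :
    X (i, j, k) * X (i', j', k') - X (i, j, k ⊓ k') * X (i', j', k ⊔ k')
      ∈ ddIdeal K m n r := by
  rcases le_total k k' with h | h
  · rw [inf_eq_left.mpr h, sup_eq_right.mpr h, sub_self]; exact zero_mem _
  · rw [inf_eq_right.mpr h, sup_eq_left.mpr h]; exact memR i i' j j' k k'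

lemma memSwap (a b : Fin m × Fin n × Fin r) :
    X a * X b - X (a ⊓ b) * X (a ⊔ b) ∈ ddIdeal K m n r := by
  obtain ⟨i, j, k⟩ := a
  obtain ⟨i', j', k'⟩ := b
  have hinf : ((i, j, k) : Fin m × Fin n × Fin r) ⊓ (i', j', k')
      = (i ⊓ i', j ⊓ j', k ⊓ k') := rfl
  have hsup : ((i, j, k) : Fin m × Fin n × Fin r) ⊔ (i', j', k')
      = (i ⊔ i', j ⊔ j', k ⊔ k') := rfl
  rw [hinf, hsup]
  have h1 := memSwapI (K := K) i i' j j' k k'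
  have h2 := memSwapJ (K := K) (i ⊓ i') (i ⊔ i') j j' k k'
  have h3 := memSwapK (K := K) (i ⊓ i') (i ⊔ i') (j ⊓ j') (j ⊔ j') k k'
  have heq : (X (i, j, k) * X (i', j', k')
        - X (i ⊓ i', j ⊓ j', k ⊓ k') * X (i ⊔ i', j ⊔ j', k ⊔ k')
      : MvPolynomial (Fin m × Fin n × Fin r) K)
      = (X (i, j, k) * X (i', j', k') - X (i ⊓ i', j, k) * X (i ⊔ i', j', k'))
        + (X (i ⊓ i', j, k) * X (i ⊔ i', j', k')
            - X (i ⊓ i', j ⊓ j', k) * X (i ⊔ i', j ⊔ j', k'))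
        + (X (i ⊓ i', j ⊓ j', k) * X (i ⊔ i', j ⊔ j', k')
            - X (i ⊓ i', j ⊓ j', k ⊓ k') * X (i ⊔ i', j ⊔ j', k ⊔ k')) := by ring
  rw [heq]
  exact add_mem (add_mem h1 h2) h3


/-- the canonical (component-wise sorted) list attached to a multiset of triples -/
def canonL (s : Multiset (Fin m × Fin n × Fin r)) : List (Fin m × Fin n × Fin r) :=
  ((s.map Prod.fst).sort (· ≤ ·)).zip
    (((s.map fun a => a.2.1).sort (· ≤ ·)).zip ((s.map fun a => a.2.2).sort (· ≤ ·)))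

lemma canonL_cons (c : Fin m × Fin n × Fin r) (s : Multiset (Fin m × Fin n × Fin r))
    (h : ∀ x ∈ s, c ≤ x) : canonL (c ::ₘ s) = c :: canonL s := by
  unfold canonL
  rw [Multiset.map_cons, Multiset.map_cons, Multiset.map_cons,
    Multiset.sort_cons _ _ _ (fun b hb => ?_), Multiset.sort_cons _ _ _ (fun b hb => ?_),
    Multiset.sort_cons _ _ _ (fun b hb => ?_)]
  · simp [List.zip_cons_cons]
  · obtain ⟨x, hx, rfl⟩ := Multiset.mem_map.1 hb
    exact (Prod.le_def.1 ((Prod.le_def.1 (h x hx)).2)).2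
  · obtain ⟨x, hx, rfl⟩ := Multiset.mem_map.1 hb
    exact (Prod.le_def.1 ((Prod.le_def.1 (h x hx)).2)).1
  · obtain ⟨x, hx, rfl⟩ := Multiset.mem_map.1 hb
    exact (Prod.le_def.1 (h x hx)).1

lemma canonL_comp1 (s : Multiset (Fin m × Fin n × Fin r)) :
    (canonL s : Multiset (Fin m × Fin n × Fin r)).map Prod.fst = s.map Prod.fst := by
  unfold canonL
  rw [Multiset.map_coe, List.map_fst_zip, Multiset.sort_eq]
  rw [Multiset.length_sort, List.length_zip, Multiset.length_sort, Multiset.length_sort]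
  simp [le_refl]

lemma canonL_comp2 (s : Multiset (Fin m × Fin n × Fin r)) :
    (canonL s : Multiset (Fin m × Fin n × Fin r)).map (fun a => a.2.1)
      = s.map (fun a => a.2.1) := by
  unfold canonL
  rw [Multiset.map_coe]
  have : (List.map (fun a => a.2.1)
      (((s.map Prod.fst).sort (· ≤ ·)).zip
        (((s.map fun a => a.2.1).sort (· ≤ ·)).zip ((s.map fun a => a.2.2).sort (· ≤ ·)))))
      = List.map Prod.fst (List.map Prod.snd
        (((s.map Prod.fst).sort (· ≤ ·)).zip
          (((s.map fun a => a.2.1).sort (· ≤ ·)).zip ((s.map fun a => a.2.2).sort (· ≤ ·))))) := by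
    rw [List.map_map]; rfl
  rw [this, List.map_snd_zip, List.map_fst_zip, Multiset.sort_eq]
  · rw [Multiset.length_sort, Multiset.length_sort]; simp
  · rw [Multiset.length_sort, List.length_zip, Multiset.length_sort, Multiset.length_sort]
    simp [le_refl]

lemma canonL_comp3 (s : Multiset (Fin m × Fin n × Fin r)) :
    (canonL s : Multiset (Fin m × Fin n × Fin r)).map (fun a => a.2.2)
      = s.map (fun a => a.2.2) := by
  unfold canonL
  rw [Multiset.map_coe]
  have : (List.map (fun a => a.2.2)
      (((s.map Prod.fst).sort (· ≤ ·)).zip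
        (((s.map fun a => a.2.1).sort (· ≤ ·)).zip ((s.map fun a => a.2.2).sort (· ≤ ·)))))
      = List.map Prod.snd (List.map Prod.snd
        (((s.map Prod.fst).sort (· ≤ ·)).zip
          (((s.map fun a => a.2.1).sort (· ≤ ·)).zip ((s.map fun a => a.2.2).sort (· ≤ ·))))) := by
    rw [List.map_map]; rfl
  rw [this, List.map_snd_zip, List.map_snd_zip, Multiset.sort_eq]
  · rw [Multiset.length_sort, Multiset.length_sort]; simp
  · rw [Multiset.length_sort, List.length_zip, Multiset.length_sort, Multiset.length_sort]
    simp [le_refl]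


lemma canonL_congr (s s' : Multiset (Fin m × Fin n × Fin r))
    (h1 : s.map Prod.fst = s'.map Prod.fst)
    (h2 : s.map (fun a => a.2.1) = s'.map (fun a => a.2.1))
    (h3 : s.map (fun a => a.2.2) = s'.map (fun a => a.2.2)) : canonL s = canonL s' := by
  unfold canonL; rw [h1, h2, h3]

lemma pairminmax {α : Type*} [LinearOrder α] (x y : α) (u : Multiset α) :
    (x ⊓ y) ::ₘ (x ⊔ y) ::ₘ u = x ::ₘ y ::ₘ u := by
  rcases le_total x y with h | h
  · rw [inf_eq_left.mpr h, sup_eq_right.mpr h]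
  · rw [inf_eq_right.mpr h, sup_eq_left.mpr h, Multiset.cons_swap]

lemma pairmaxmin {α : Type*} [LinearOrder α] (x y : α) (u : Multiset α) :
    (x ⊔ y) ::ₘ (x ⊓ y) ::ₘ u = x ::ₘ y ::ₘ u := by
  rw [Multiset.cons_swap, pairminmax]

lemma meetFold (t : Multiset (Fin m × Fin n × Fin r)) : ∀ a : Fin m × Fin n × Fin r,
    ∃ (c : Fin m × Fin n × Fin r) (t' : Multiset (Fin m × Fin n × Fin r)),
      c ≤ a ∧ (∀ x ∈ t', c ≤ x) ∧
      ((c ::ₘ t').map Prod.fst = (a ::ₘ t).map Prod.fst) ∧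
      ((c ::ₘ t').map (fun a => a.2.1) = (a ::ₘ t).map (fun a => a.2.1)) ∧
      ((c ::ₘ t').map (fun a => a.2.2) = (a ::ₘ t).map (fun a => a.2.2)) ∧
      X a * (t.map X).prod - X c * (t'.map X).prod ∈ ddIdeal K m n r := by
  induction t using Multiset.induction with
  | empty =>
    intro a
    exact ⟨a, 0, le_refl a, fun x hx => absurd hx (Multiset.notMem_zero x),
      rfl, rfl, rfl, by simp⟩
  | cons b u IH =>
    intro a
    obtain ⟨c, u', hca, hcu, h1, h2, h3, hmem⟩ := IH (a ⊓ b)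
    refine ⟨c, (a ⊔ b) ::ₘ u', hca.trans inf_le_left, ?_, ?_, ?_, ?_, ?_⟩
    · intro x hx
      rcases Multiset.mem_cons.1 hx with rfl | hx
      · exact (hca.trans inf_le_left).trans le_sup_left
      · exact hcu x hx
    · simp only [Multiset.map_cons] at h1 ⊢
      rw [Multiset.cons_swap, h1, Prod.fst_sup, Prod.fst_inf]
      exact pairmaxmin a.1 b.1 _
    · simp only [Multiset.map_cons] at h2 ⊢
      rw [Multiset.cons_swap, h2]
      have e1 : (a ⊔ b).2.1 = a.2.1 ⊔ b.2.1 := rfl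
      have e2 : (a ⊓ b).2.1 = a.2.1 ⊓ b.2.1 := rfl
      rw [e1, e2]
      exact pairmaxmin a.2.1 b.2.1 _
    · simp only [Multiset.map_cons] at h3 ⊢
      rw [Multiset.cons_swap, h3]
      have e1 : (a ⊔ b).2.2 = a.2.2 ⊔ b.2.2 := rfl
      have e2 : (a ⊓ b).2.2 = a.2.2 ⊓ b.2.2 := rfl
      rw [e1, e2]
      exact pairmaxmin a.2.2 b.2.2 _
    · have heq : X a * ((b ::ₘ u).map X).prod - X c * (((a ⊔ b) ::ₘ u').map X).prod
          = (X a * X b - X (a ⊓ b) * X (a ⊔ b)) * ((u.map X).prod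
              : MvPolynomial (Fin m × Fin n × Fin r) K)
            + X (a ⊔ b) * (X (a ⊓ b) * (u.map X).prod - X c * (u'.map X).prod) := by
        rw [Multiset.map_cons, Multiset.prod_cons, Multiset.map_cons, Multiset.prod_cons]
        ring
      rw [heq]
      exact add_mem (Ideal.mul_mem_right _ _ (memSwap a b)) (Ideal.mul_mem_left _ _ hmem)

lemma sortMem_aux : ∀ (N : ℕ) (s : Multiset (Fin m × Fin n × Fin r)), Multiset.card s ≤ N →
    (s.map X).prod - (((canonL s : List (Fin m × Fin n × Fin r)) : Multiset (Fin m × Fin n × Fin r)).map X).prod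
      ∈ ddIdeal K m n r := by
  intro N
  induction N with
  | zero =>
    intro s hs
    have : s = 0 := Multiset.card_eq_zero.1 (Nat.le_zero.1 hs)
    subst this
    simp [canonL]
  | succ N IH =>
    intro s hs
    by_cases h0 : s = 0
    · subst h0; simp [canonL]
    obtain ⟨a, ha⟩ := Multiset.exists_mem_of_ne_zero h0
    obtain ⟨t, rfl⟩ := Multiset.exists_cons_of_mem ha
    obtain ⟨c, t', hca, hcu, h1, h2, h3, hmem⟩ := meetFold (K := K) t a
    have hcanon : canonL (a ::ₘ t) = c :: canonL t' := by
      rw [canonL_congr (a ::ₘ t) (c ::ₘ t') h1.symm h2.symm h3.symm, canonL_cons c t' hcu]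
    have hcard : Multiset.card t' ≤ N := by
      have hc := congrArg Multiset.card h1
      simp only [Multiset.card_map, Multiset.card_cons] at hc hs
      omega
    have hIH := IH t' hcard
    have heq : ((((a ::ₘ t).map X).prod : MvPolynomial (Fin m × Fin n × Fin r) K))
          - (((canonL (a ::ₘ t) : List (Fin m × Fin n × Fin r))
              : Multiset (Fin m × Fin n × Fin r)).map X).prod
        = (X a * (t.map X).prod - X c * (t'.map X).prod)
          + X c * ((t'.map X).prod
            - (((canonL t' : List (Fin m × Fin n × Fin r))
                : Multiset (Fin m × Fin n × Fin r)).map X).prod) := by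
      rw [hcanon, ← Multiset.cons_coe, Multiset.map_cons, Multiset.prod_cons,
        Multiset.map_cons, Multiset.prod_cons]
      ring
    rw [heq]
    exact add_mem hmem (Ideal.mul_mem_left _ _ hIH)

lemma sortMem (s : Multiset (Fin m × Fin n × Fin r)) :
    (s.map X).prod - (((canonL s : List (Fin m × Fin n × Fin r))
        : Multiset (Fin m × Fin n × Fin r)).map X).prod ∈ ddIdeal K m n r :=
  sortMem_aux (Multiset.card s) s le_rfl


lemma prod_map_X_toMultiset (d : (Fin m × Fin n × Fin r) →₀ ℕ) :
    ((Finsupp.toMultiset d).map X).prod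
      = (monomial d 1 : MvPolynomial (Fin m × Fin n × Fin r) K) := by
  induction d using Finsupp.induction with
  | zero => simp
  | single_add a nn f han hn ih =>
    rw [Finsupp.toMultiset_add, Multiset.map_add, Multiset.prod_add, ih,
      Finsupp.toMultiset_single, Multiset.map_nsmul, Multiset.map_singleton,
      Multiset.prod_nsmul, Multiset.prod_singleton, X_pow_eq_monomial, monomial_mul, one_mul]

noncomputable def Fexp (s : Multiset (Fin m × Fin n × Fin r)) :
    (Fin m ⊕ Fin n ⊕ Fin r) →₀ ℕ :=
  (s.map fun a => Finsupp.single (Sum.inl a.1) 1 + Finsupp.single (Sum.inr (Sum.inl a.2.1)) 1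
    + Finsupp.single (Sum.inr (Sum.inr a.2.2)) 1).sum

lemma ddphi_prod (s : Multiset (Fin m × Fin n × Fin r)) :
    ddphi K m n r ((s.map X).prod) = monomial (Fexp s) 1 := by
  induction s using Multiset.induction with
  | empty => simp [Fexp]
  | cons a t ih =>
    rw [Multiset.map_cons, Multiset.prod_cons, map_mul, ih]
    have hX : ddphi K m n r (X a) = monomial (Finsupp.single (Sum.inl a.1) 1
        + Finsupp.single (Sum.inr (Sum.inl a.2.1)) 1
        + Finsupp.single (Sum.inr (Sum.inr a.2.2)) 1) 1 := by
      rw [ddphi, aeval_X]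
      rw [show (X (Sum.inl a.1) : MvPolynomial (Fin m ⊕ Fin n ⊕ Fin r) K)
          = monomial (Finsupp.single (Sum.inl a.1) 1) 1 from by
        rw [← X_pow_eq_monomial, pow_one]]
      rw [show (X (Sum.inr (Sum.inl a.2.1)) : MvPolynomial (Fin m ⊕ Fin n ⊕ Fin r) K)
          = monomial (Finsupp.single (Sum.inr (Sum.inl a.2.1)) 1) 1 from by
        rw [← X_pow_eq_monomial, pow_one]]
      rw [show (X (Sum.inr (Sum.inr a.2.2)) : MvPolynomial (Fin m ⊕ Fin n ⊕ Fin r) K)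
          = monomial (Finsupp.single (Sum.inr (Sum.inr a.2.2)) 1) 1 from by
        rw [← X_pow_eq_monomial, pow_one]]
      rw [monomial_mul, monomial_mul, one_mul, one_mul]
    rw [hX, monomial_mul, one_mul]
    congr 1
    rw [Fexp, Fexp, Multiset.map_cons, Multiset.sum_cons]

lemma Fexp_inl (s : Multiset (Fin m × Fin n × Fin r)) (i : Fin m) :
    Fexp s (Sum.inl i) = (s.map Prod.fst).count i := by
  induction s using Multiset.induction with
  | empty => simp [Fexp]
  | cons a t ih =>
    rw [Fexp, Multiset.map_cons, Multiset.sum_cons, ← Fexp]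
    rw [Multiset.map_cons, Multiset.count_cons]
    simp only [Finsupp.add_apply, Finsupp.single_apply, ih]
    simp [eq_comm]
    omega

lemma Fexp_inrl (s : Multiset (Fin m × Fin n × Fin r)) (j : Fin n) :
    Fexp s (Sum.inr (Sum.inl j)) = (s.map fun a => a.2.1).count j := by
  induction s using Multiset.induction with
  | empty => simp [Fexp]
  | cons a t ih =>
    rw [Fexp, Multiset.map_cons, Multiset.sum_cons, ← Fexp]
    rw [Multiset.map_cons, Multiset.count_cons]
    simp only [Finsupp.add_apply, Finsupp.single_apply, ih]
    simp [eq_comm]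
    omega

lemma Fexp_inrr (s : Multiset (Fin m × Fin n × Fin r)) (k : Fin r) :
    Fexp s (Sum.inr (Sum.inr k)) = (s.map fun a => a.2.2).count k := by
  induction s using Multiset.induction with
  | empty => simp [Fexp]
  | cons a t ih =>
    rw [Fexp, Multiset.map_cons, Multiset.sum_cons, ← Fexp]
    rw [Multiset.map_cons, Multiset.count_cons]
    simp only [Finsupp.add_apply, Finsupp.single_apply, ih]
    simp [eq_comm]
    omega

lemma ddIdeal_le_ker : ddIdeal K m n r ≤ RingHom.ker (ddphi K m n r) := by
  rw [ddIdeal, Ideal.span_le]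
  rintro f (⟨i,i',j,j',k,hi,hj,rfl⟩ | ⟨i,i',j,j',k,k',hi,hk,rfl⟩ | ⟨i,i',j,j',k,k',hj,hk,rfl⟩) <;>
  · simp only [SetLike.mem_coe, RingHom.mem_ker, map_sub, map_mul, ddphi, aeval_X]
    ring


lemma prod_map_X_multiset (M : Multiset (Fin m × Fin n × Fin r)) :
    (M.map X).prod = (monomial M.toFinsupp 1 : MvPolynomial (Fin m × Fin n × Fin r) K) := by
  have := prod_map_X_toMultiset (K := K) M.toFinsupp
  rwa [Multiset.toFinsupp_toMultiset] at this

lemma Fexp_congr (M M' : Multiset (Fin m × Fin n × Fin r))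
    (h1 : M.map Prod.fst = M'.map Prod.fst)
    (h2 : M.map (fun a => a.2.1) = M'.map (fun a => a.2.1))
    (h3 : M.map (fun a => a.2.2) = M'.map (fun a => a.2.2)) : Fexp M = Fexp M' := by
  ext a
  rcases a with i | j | k
  · rw [Fexp_inl, Fexp_inl, h1]
  · rw [Fexp_inrl, Fexp_inrl, h2]
  · rw [Fexp_inrr, Fexp_inrr, h3]

lemma ddphi_C (c : K) : ddphi K m n r (C c) = C c := by
  rw [ddphi, aeval_C]
  rfl


noncomputable def eNF (d : (Fin m × Fin n × Fin r) →₀ ℕ) : (Fin m × Fin n × Fin r) →₀ ℕ :=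
  (((canonL (Finsupp.toMultiset d) : List (Fin m × Fin n × Fin r)))
    : Multiset (Fin m × Fin n × Fin r)).toFinsupp

noncomputable def uF (d : (Fin m × Fin n × Fin r) →₀ ℕ) : (Fin m ⊕ Fin n ⊕ Fin r) →₀ ℕ :=
  Fexp (Finsupp.toMultiset d)

lemma Fexp_canon (d : (Fin m × Fin n × Fin r) →₀ ℕ) :
    Fexp (((canonL (Finsupp.toMultiset d) : List (Fin m × Fin n × Fin r)))
      : Multiset (Fin m × Fin n × Fin r)) = uF d :=
  Fexp_congr _ _ (canonL_comp1 _) (canonL_comp2 _) (canonL_comp3 _)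

lemma hNF (d : (Fin m × Fin n × Fin r) →₀ ℕ) :
    (monomial d (1 : K)) - monomial (eNF d) 1 ∈ ddIdeal K m n r := by
  have h := sortMem (K := K) (Finsupp.toMultiset d)
  rwa [prod_map_X_toMultiset, prod_map_X_multiset] at h

lemma hphi (d : (Fin m × Fin n × Fin r) →₀ ℕ) :
    ddphi K m n r (monomial d (1 : K)) = monomial (uF d) 1 := by
  rw [← prod_map_X_toMultiset, ddphi_prod]; rfl

lemma hphiNF (d : (Fin m × Fin n × Fin r) →₀ ℕ) :
    ddphi K m n r (monomial (eNF d) (1 : K)) = monomial (uF d) 1 := by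
  rw [← prod_map_X_toMultiset, eNF, Multiset.toFinsupp_toMultiset, ddphi_prod, Fexp_canon]

lemma hue (d : (Fin m × Fin n × Fin r) →₀ ℕ) :
    uF d = Fexp (Finsupp.toMultiset (eNF d)) := by
  rw [eNF, Multiset.toFinsupp_toMultiset, Fexp_canon]

lemma he_congr (d d' : (Fin m × Fin n × Fin r) →₀ ℕ) (h : uF d = uF d') :
    eNF d = eNF d' := by
  have h' : Fexp (Finsupp.toMultiset d) = Fexp (Finsupp.toMultiset d') := h
  have h1 : (Finsupp.toMultiset d).map Prod.fst = (Finsupp.toMultiset d').map Prod.fst := by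
    ext i
    rw [← Fexp_inl, ← Fexp_inl, h']
  have h2 : (Finsupp.toMultiset d).map (fun a => a.2.1)
      = (Finsupp.toMultiset d').map (fun a => a.2.1) := by
    ext j
    rw [← Fexp_inrl, ← Fexp_inrl, h']
  have h3 : (Finsupp.toMultiset d).map (fun a => a.2.2)
      = (Finsupp.toMultiset d').map (fun a => a.2.2) := by
    ext k
    rw [← Fexp_inrr, ← Fexp_inrr, h']
  rw [eNF, eNF, canonL_congr _ _ h1 h2 h3]

lemma ker_le_ddIdeal : RingHom.ker (ddphi K m n r) ≤ ddIdeal K m n r := by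
  classical
  intro f hf
  have hf0 : ddphi K m n r f = 0 := by rwa [RingHom.mem_ker] at hf
  set g : MvPolynomial (Fin m × Fin n × Fin r) K :=
    ∑ d ∈ f.support, C (coeff d f) * monomial (eNF d) 1 with hg
  have hfg : f - g ∈ ddIdeal K m n r := by
    nth_rewrite 1 [as_sum f]
    rw [hg, ← Finset.sum_sub_distrib]
    refine Ideal.sum_mem _ fun d hd => ?_
    have : monomial d (coeff d f) - C (coeff d f) * monomial (eNF d) 1
        = C (coeff d f) * (monomial d 1 - monomial (eNF d) 1) := by
      simp [mul_sub, C_mul_monomial]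
    rw [this]
    exact Ideal.mul_mem_left _ _ (hNF d)
  have hphig : ddphi K m n r g = 0 := by
    have h1 : ddphi K m n r (f - g) = 0 := by
      have := ddIdeal_le_ker hfg
      rwa [RingHom.mem_ker] at this
    rw [map_sub, hf0, zero_sub, neg_eq_zero] at h1
    exact h1
  have hgexp : ddphi K m n r g = ∑ d ∈ f.support, C (coeff d f) * monomial (uF d) 1 := by
    rw [hg, map_sum]
    refine Finset.sum_congr rfl fun d hd => ?_
    rw [map_mul, hphiNF d, ddphi_C]
  have hg0 : g = 0 := by
    apply MvPolynomial.ext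
    intro ε
    rw [coeff_zero, hg, coeff_sum]
    by_cases hex : ∃ d₀ ∈ f.support, eNF d₀ = ε
    · obtain ⟨d₀, hd₀, hed₀⟩ := hex
      have h0 : (0 : K) = ∑ d ∈ f.support, coeff d f
          * (if uF d = uF d₀ then (1 : K) else 0) :=
        calc (0 : K) = coeff (uF d₀) (ddphi K m n r g) := by rw [hphig, coeff_zero]
          _ = ∑ d ∈ f.support, coeff d f * (if uF d = uF d₀ then (1 : K) else 0) := by
              rw [hgexp, coeff_sum]
              refine Finset.sum_congr rfl fun d hd => ?_
              rw [coeff_C_mul, coeff_monomial]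
      refine (Finset.sum_congr rfl fun d hd => ?_).trans h0.symm
      have hiff : (eNF d = ε) ↔ (uF d = uF d₀) := by
        constructor
        · intro h
          rw [hue, hue, h, ← hed₀]
        · intro h
          rw [he_congr d d₀ h, hed₀]
      rw [coeff_C_mul, coeff_monomial, if_congr hiff rfl rfl]
    · push_neg at hex
      refine Finset.sum_eq_zero fun d hd => ?_
      rw [coeff_C_mul, coeff_monomial, if_neg (hex d hd), mul_zero]
  rw [← sub_zero f, ← hg0]
  exact hfg

end aux

theorem stmt_3 (K : Type*) [Field K] (m n r : ℕ) (hm : 0 < m) (hn : 0 < n) (hr : 0 < r) :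
    ddIdeal K m n r = RingHom.ker (ddphi K m n r) :=
  le_antisymm ddIdeal_le_ker ker_le_ddIdeal
end

section
/- The ideal I(m,n,r) is a prime ideal of R; equivalently, the quotient ring R ⧸ I(m,n,r) is an integral domain. -/
open MvPolynomial

set_option maxHeartbeats 1000000
namespace DD
variable {K : Type*} [Field K] {m n r : ℕ}

lemma mem_of_eq {A : Type*} [CommRing A] {I : Ideal A} {a b : A} (h : a ∈ I) (e : b = a) :
    b ∈ I := e ▸ h

lemma gen1 {i i' : Fin m} {j j' : Fin n} (k : Fin r) (h1 : i < i') (h2 : j < j') :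
    X (i, j, k) * X (i', j', k) - X (i, j', k) * X (i', j, k) ∈ ddIdeal K m n r :=
  Ideal.subset_span (Or.inl ⟨i, i', j, j', k, h1, h2, rfl⟩)

lemma gen2 {i i' : Fin m} (j j' : Fin n) {k k' : Fin r} (h1 : i < i') (h2 : k < k') :
    X (i, j, k) * X (i', j', k') - X (i, j', k') * X (i', j, k) ∈ ddIdeal K m n r :=
  Ideal.subset_span (Or.inr (Or.inl ⟨i, i', j, j', k, k', h1, h2, rfl⟩))

lemma gen3 (i i' : Fin m) {j j' : Fin n} {k k' : Fin r} (h1 : j < j') (h2 : k < k') :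
    X (i, j, k) * X (i', j', k') - X (i, j', k) * X (i', j, k') ∈ ddIdeal K m n r :=
  Ideal.subset_span (Or.inr (Or.inr ⟨i, i', j, j', k, k', h1, h2, rfl⟩))

/-- swap the `j` coordinates of two variables -/
lemma swapJ (i i' : Fin m) (j j' : Fin n) (k k' : Fin r) :
    X (i, j, k) * X (i', j', k') - X (i, j', k) * X (i', j, k')
      ∈ ddIdeal (K := K) m n r := by
  have main : ∀ (a a' : Fin m) (b b' : Fin n) (c c' : Fin r), b < b' →
      X (a, b, c) * X (a', b', c') - X (a, b', c) * X (a', b, c')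
        ∈ ddIdeal (K := K) m n r := by
    intro a a' b b' c c' hb
    rcases lt_trichotomy c c' with hc | hc | hc
    · exact gen3 a a' hb hc
    · subst hc
      rcases lt_trichotomy a a' with ha | ha | ha
      · exact gen1 c ha hb
      · subst ha; exact mem_of_eq (Ideal.zero_mem _) (by ring)
      · exact mem_of_eq (neg_mem (gen1 c ha hb)) (by ring)
    · exact mem_of_eq (neg_mem (gen3 a' a hb hc)) (by ring)
  rcases lt_trichotomy j j' with h | h | h
  · exact main i i' j j' k k' h
  · subst h; exact mem_of_eq (Ideal.zero_mem _) (by ring)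
  · exact mem_of_eq (neg_mem (main i i' j' j k k' h)) (by ring)

/-- swap the `i` coordinates of two variables -/
lemma swapI (i i' : Fin m) (j j' : Fin n) (k k' : Fin r) :
    X (i, j, k) * X (i', j', k') - X (i', j, k) * X (i, j', k')
      ∈ ddIdeal (K := K) m n r := by
  have main : ∀ (a a' : Fin m) (b b' : Fin n) (c c' : Fin r), a < a' →
      X (a, b, c) * X (a', b', c') - X (a', b, c) * X (a, b', c')
        ∈ ddIdeal (K := K) m n r := by
    intro a a' b b' c c' ha
    rcases lt_trichotomy c c' with hc | hc | hc
    · exact mem_of_eq (gen2 b b' ha hc) (by ring)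
    · subst hc
      rcases lt_trichotomy b b' with hb | hb | hb
      · exact mem_of_eq (gen1 c ha hb) (by ring)
      · subst hb; exact mem_of_eq (Ideal.zero_mem _) (by ring)
      · exact mem_of_eq (neg_mem (gen1 c ha hb)) (by ring)
    · exact mem_of_eq (neg_mem (gen2 b' b ha hc)) (by ring)
  rcases lt_trichotomy i i' with h | h | h
  · exact main i i' j j' k k' h
  · subst h; exact mem_of_eq (Ideal.zero_mem _) (by ring)
  · exact mem_of_eq (neg_mem (main i' i j j' k k' h)) (by ring)

/-- swap the `k` coordinates of two variables -/
lemma swapK (i i' : Fin m) (j j' : Fin n) (k k' : Fin r) :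
    X (i, j, k) * X (i', j', k') - X (i, j, k') * X (i', j', k)
      ∈ ddIdeal (K := K) m n r := by
  have h1 := swapJ (K := K) i i' j j' k k'
  have h2 := swapI (K := K) i i' j' j k k'
  exact mem_of_eq (add_mem h1 h2) (by ring)


noncomputable def mprod (K : Type*) [Field K] {m n r : ℕ}
    (s : Multiset (Fin m × Fin n × Fin r)) : MvPolynomial (Fin m × Fin n × Fin r) K :=
  (s.map X).prod

lemma mprod_cons (v : Fin m × Fin n × Fin r) (s : Multiset (Fin m × Fin n × Fin r)) :
    mprod K (v ::ₘ s) = X v * mprod K s := by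
  simp [mprod]

lemma pair_step {v w v' w' : Fin m × Fin n × Fin r} (rest : Multiset (Fin m × Fin n × Fin r))
    (h : X v * X w - X v' * X w' ∈ ddIdeal K m n r) :
    mprod K (v ::ₘ w ::ₘ rest) - mprod K (v' ::ₘ w' ::ₘ rest) ∈ ddIdeal K m n r := by
  have e : mprod K (v ::ₘ w ::ₘ rest) - mprod K (v' ::ₘ w' ::ₘ rest)
      = (X v * X w - X v' * X w') * mprod K rest := by
    simp only [mprod_cons]; ring
  rw [e]; exact Ideal.mul_mem_right _ _ h

lemma absorb (t : Multiset (Fin m × Fin n × Fin r)) (i : Fin m) (j : Fin n) (k : Fin r)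
    (hi : i ∈ t.map (·.1)) (hj : j ∈ t.map (·.2.1)) (hk : k ∈ t.map (·.2.2)) :
    ∃ t₀ : Multiset (Fin m × Fin n × Fin r),
      t.map (·.1) = (((i,j,k) ::ₘ t₀).map (·.1)) ∧
      t.map (·.2.1) = (((i,j,k) ::ₘ t₀).map (·.2.1)) ∧
      t.map (·.2.2) = (((i,j,k) ::ₘ t₀).map (·.2.2)) ∧
      mprod K t - mprod K ((i,j,k) ::ₘ t₀) ∈ ddIdeal K m n r := by
  classical
  -- step A : find `t₂` and `k₁` with `t ≡ (i,j,k₁) ::ₘ t₂`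
  obtain ⟨v₁, hv₁t, hv₁⟩ := Multiset.mem_map.1 hi
  obtain ⟨t₁, rfl⟩ := Multiset.exists_cons_of_mem hv₁t
  obtain ⟨i₀, j₁, k₁⟩ := v₁
  obtain rfl : i = i₀ := hv₁.symm
  have stepA : ∃ (c : Fin r) (t₂ : Multiset (Fin m × Fin n × Fin r)),
      ((i,j₁,k₁) ::ₘ t₁).map (·.1) = (((i,j,c) ::ₘ t₂).map (·.1)) ∧
      ((i,j₁,k₁) ::ₘ t₁).map (·.2.1) = (((i,j,c) ::ₘ t₂).map (·.2.1)) ∧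
      ((i,j₁,k₁) ::ₘ t₁).map (·.2.2) = (((i,j,c) ::ₘ t₂).map (·.2.2)) ∧
      mprod K ((i,j₁,k₁) ::ₘ t₁) - mprod K ((i,j,c) ::ₘ t₂) ∈ ddIdeal K m n r := by
    by_cases hjj : j₁ = j
    · subst hjj
      exact ⟨k₁, t₁, rfl, rfl, rfl, by simpa using Ideal.zero_mem _⟩
    · have hj' : j ∈ t₁.map (·.2.1) := by
        simp only [Multiset.map_cons, Multiset.mem_cons] at hj
        rcases hj with h | h
        · exact absurd h.symm hjj
        · exact h
      obtain ⟨v₂, hv₂t, hv₂⟩ := Multiset.mem_map.1 hj'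
      obtain ⟨t₂, rfl⟩ := Multiset.exists_cons_of_mem hv₂t
      obtain ⟨i₂, j₂, k₂⟩ := v₂
      obtain rfl : j = j₂ := hv₂.symm
      refine ⟨k₁, (i₂, j₁, k₂) ::ₘ t₂, ?_, ?_, ?_, ?_⟩
      · simp [Multiset.map_cons]
      · simp only [Multiset.map_cons]; exact Multiset.cons_swap _ _ _
      · simp [Multiset.map_cons]
      · exact pair_step t₂ (swapJ i i₂ j₁ j k₁ k₂)
  obtain ⟨k₁', t₂, hA1, hA2, hA3, hAmem⟩ := stepA
  -- step B : now bring in the third coordinate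
  by_cases hkk : k₁' = k
  · subst hkk; exact ⟨t₂, hA1, hA2, hA3, hAmem⟩
  · have hk' : k ∈ t₂.map (·.2.2) := by
      rw [hA3] at hk
      simp only [Multiset.map_cons, Multiset.mem_cons] at hk
      rcases hk with h | h
      · exact absurd h.symm hkk
      · exact h
    obtain ⟨v₃, hv₃t, hv₃⟩ := Multiset.mem_map.1 hk'
    obtain ⟨t₃, rfl⟩ := Multiset.exists_cons_of_mem hv₃t
    obtain ⟨i₃, j₃, k₃⟩ := v₃
    obtain rfl : k = k₃ := hv₃.symm
    refine ⟨(i₃, j₃, k₁') ::ₘ t₃, ?_, ?_, ?_, ?_⟩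
    · rw [hA1]; simp [Multiset.map_cons]
    · rw [hA2]; simp [Multiset.map_cons]
    · rw [hA3]; simp only [Multiset.map_cons]; exact Multiset.cons_swap _ _ _
    · have h2 : mprod K ((i,j,k₁') ::ₘ (i₃,j₃,k) ::ₘ t₃)
          - mprod K ((i,j,k) ::ₘ (i₃,j₃,k₁') ::ₘ t₃) ∈ ddIdeal K m n r :=
        pair_step t₃ (swapK i i₃ j j₃ k₁' k)
      exact mem_of_eq (add_mem hAmem h2) (by ring)

lemma key : ∀ (d : ℕ) (s t : Multiset (Fin m × Fin n × Fin r)), Multiset.card s = d →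
    s.map (·.1) = t.map (·.1) → s.map (·.2.1) = t.map (·.2.1) →
    s.map (·.2.2) = t.map (·.2.2) →
    mprod K s - mprod K t ∈ ddIdeal K m n r := by
  intro d
  induction d with
  | zero =>
    intro s t hc h1 _ _
    obtain rfl : s = 0 := Multiset.card_eq_zero.1 hc
    obtain rfl : t = 0 := by
      have h0 : t.map (·.1) = 0 := by simpa using h1.symm
      exact Multiset.map_eq_zero.1 h0
    simpa using Ideal.zero_mem _
  | succ d ih =>
    intro s t hc h1 h2 h3
    have hne : s ≠ 0 := by
      intro h; rw [h] at hc; simp at hc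
    obtain ⟨v, hvmem⟩ := Multiset.exists_mem_of_ne_zero hne
    obtain ⟨s₀, rfl⟩ := Multiset.exists_cons_of_mem hvmem
    obtain ⟨i, j, k⟩ := v
    have hi : i ∈ t.map (·.1) := by
      rw [← h1]; simp
    have hj : j ∈ t.map (·.2.1) := by
      rw [← h2]; simp
    have hk : k ∈ t.map (·.2.2) := by
      rw [← h3]; simp
    obtain ⟨t₀, e1, e2, e3, hmem⟩ := absorb (K := K) t i j k hi hj hk
    rw [e1] at h1; rw [e2] at h2; rw [e3] at h3
    simp only [Multiset.map_cons, Multiset.cons_inj_right] at h1 h2 h3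
    have hc0 : Multiset.card s₀ = d := by
      have : Multiset.card s₀ + 1 = d + 1 := by simpa using hc
      omega
    have ihres := ih s₀ t₀ hc0 h1 h2 h3
    have hmul : mprod K ((i,j,k) ::ₘ s₀) - mprod K ((i,j,k) ::ₘ t₀)
        = X (i,j,k) * (mprod K s₀ - mprod K t₀) := by
      simp only [mprod_cons]; ring
    have h4 : mprod K ((i,j,k) ::ₘ s₀) - mprod K ((i,j,k) ::ₘ t₀) ∈ ddIdeal K m n r := by
      rw [hmul]; exact Ideal.mul_mem_left _ _ ihres
    exact mem_of_eq (add_mem h4 (neg_mem hmem)) (by ring)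


lemma prodX_eq {σ : Type*} [DecidableEq σ] (s : Multiset σ) :
    ((s.map (X : σ → MvPolynomial σ K)).prod) = monomial (Multiset.toFinsupp s) 1 := by
  induction s using Multiset.induction with
  | empty => simp
  | cons a s ih =>
    have hc : Multiset.toFinsupp (a ::ₘ s) = Multiset.toFinsupp s + Finsupp.single a 1 := by
      rw [show (a ::ₘ s) = {a} + s from by simp [Multiset.singleton_add], map_add,
        Multiset.toFinsupp_singleton]
      exact add_comm _ _
    rw [Multiset.map_cons, Multiset.prod_cons, ih, hc, monomial_add_single, pow_one]
    ring

/-- the toric map -/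
noncomputable def phi (K : Type*) [Field K] (m n r : ℕ) :
    MvPolynomial (Fin m × Fin n × Fin r) K →ₐ[K] MvPolynomial (Fin m ⊕ Fin n ⊕ Fin r) K :=
  aeval fun v => X (Sum.inl v.1) * X (Sum.inr (Sum.inl v.2.1)) * X (Sum.inr (Sum.inr v.2.2))

lemma phi_X (v : Fin m × Fin n × Fin r) :
    phi K m n r (X v)
      = X (Sum.inl v.1) * X (Sum.inr (Sum.inl v.2.1)) * X (Sum.inr (Sum.inr v.2.2)) := by
  simp [phi]

/-- extraction of the first marginal -/
lemma marginal1 {s t : Multiset (Fin m × Fin n × Fin r)}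
    (h : phi K m n r (mprod K s) = phi K m n r (mprod K t)) :
    s.map (·.1) = t.map (·.1) := by
  classical
  let ρ : MvPolynomial (Fin m ⊕ Fin n ⊕ Fin r) K →ₐ[K] MvPolynomial (Fin m) K :=
    aeval (Sum.elim X fun _ => 1)
  have hcomp : ∀ u : Multiset (Fin m × Fin n × Fin r),
      ρ (phi K m n r (mprod K u)) = monomial (Multiset.toFinsupp (u.map (·.1))) 1 := by
    intro u
    rw [← prodX_eq]
    simp only [mprod, map_multiset_prod, Multiset.map_map]
    congr 1
    ext v
    simp [phi, ρ]
  have := congrArg ρ h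
  rw [hcomp, hcomp] at this
  have h2 := monomial_left_injective (one_ne_zero (α := K)) this
  have := congrArg Multiset.toFinsupp.symm h2
  simpa using this

lemma marginal2 {s t : Multiset (Fin m × Fin n × Fin r)}
    (h : phi K m n r (mprod K s) = phi K m n r (mprod K t)) :
    s.map (·.2.1) = t.map (·.2.1) := by
  classical
  let ρ : MvPolynomial (Fin m ⊕ Fin n ⊕ Fin r) K →ₐ[K] MvPolynomial (Fin n) K :=
    aeval (Sum.elim (fun _ => 1) (Sum.elim X fun _ => 1))
  have hcomp : ∀ u : Multiset (Fin m × Fin n × Fin r),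
      ρ (phi K m n r (mprod K u)) = monomial (Multiset.toFinsupp (u.map (·.2.1))) 1 := by
    intro u
    rw [← prodX_eq]
    simp only [mprod, map_multiset_prod, Multiset.map_map]
    congr 1
    ext v
    simp [phi, ρ]
  have := congrArg ρ h
  rw [hcomp, hcomp] at this
  have h2 := monomial_left_injective (one_ne_zero (α := K)) this
  have := congrArg Multiset.toFinsupp.symm h2
  simpa using this

lemma marginal3 {s t : Multiset (Fin m × Fin n × Fin r)}
    (h : phi K m n r (mprod K s) = phi K m n r (mprod K t)) :
    s.map (·.2.2) = t.map (·.2.2) := by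
  classical
  let ρ : MvPolynomial (Fin m ⊕ Fin n ⊕ Fin r) K →ₐ[K] MvPolynomial (Fin r) K :=
    aeval (Sum.elim (fun _ => 1) (Sum.elim (fun _ => 1) X))
  have hcomp : ∀ u : Multiset (Fin m × Fin n × Fin r),
      ρ (phi K m n r (mprod K u)) = monomial (Multiset.toFinsupp (u.map (·.2.2))) 1 := by
    intro u
    rw [← prodX_eq]
    simp only [mprod, map_multiset_prod, Multiset.map_map]
    congr 1
    ext v
    simp [phi, ρ]
  have := congrArg ρ h
  rw [hcomp, hcomp] at this
  have h2 := monomial_left_injective (one_ne_zero (α := K)) this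
  have := congrArg Multiset.toFinsupp.symm h2
  simpa using this

/-- monomials as multiset products -/
lemma monomial_eq_mprod (μ : (Fin m × Fin n × Fin r) →₀ ℕ) :
    (monomial μ 1 : MvPolynomial (Fin m × Fin n × Fin r) K)
      = mprod K (Finsupp.toMultiset μ) := by
  classical
  rw [mprod, prodX_eq, Finsupp.toMultiset_toFinsupp]

/-- binomials with equal toric image lie in the ideal -/
lemma binomial_mem {μ ν : (Fin m × Fin n × Fin r) →₀ ℕ}
    (h : phi K m n r (monomial μ 1) = phi K m n r (monomial ν 1)) :
    (monomial μ 1 : MvPolynomial (Fin m × Fin n × Fin r) K) - monomial ν 1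
      ∈ ddIdeal K m n r := by
  classical
  rw [monomial_eq_mprod, monomial_eq_mprod] at h ⊢
  exact key (Multiset.card (Finsupp.toMultiset μ)) _ _ rfl
    (marginal1 h) (marginal2 h) (marginal3 h)


lemma phi_mprod_monic (s : Multiset (Fin m × Fin n × Fin r)) :
    ∃ ν, phi K m n r (mprod K s) = monomial ν 1 := by
  induction s using Multiset.induction with
  | empty =>
    refine ⟨0, ?_⟩
    simp [mprod, monomial_zero']
  | cons a s ih =>
    obtain ⟨ν, hν⟩ := ih
    have step : ∀ (ν' : (Fin m ⊕ Fin n ⊕ Fin r) →₀ ℕ) (u : Fin m ⊕ Fin n ⊕ Fin r),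
        (monomial ν' (1:K)) * X u = monomial (ν' + Finsupp.single u 1) 1 := by
      intro ν' u; rw [monomial_add_single, pow_one]
    refine ⟨ν + Finsupp.single (Sum.inl a.1) 1 + Finsupp.single (Sum.inr (Sum.inl a.2.1)) 1
      + Finsupp.single (Sum.inr (Sum.inr a.2.2)) 1, ?_⟩
    rw [mprod_cons, map_mul, phi_X, hν]
    have e : (X (Sum.inl a.1) * X (Sum.inr (Sum.inl a.2.1)) * X (Sum.inr (Sum.inr a.2.2)))
          * monomial ν (1:K)
        = ((monomial ν (1:K) * X (Sum.inl a.1)) * X (Sum.inr (Sum.inl a.2.1)))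
          * X (Sum.inr (Sum.inr a.2.2)) := by ring
    rw [e, step, step, step]

lemma phi_monomial (μ : (Fin m × Fin n × Fin r) →₀ ℕ) :
    ∃ ν, phi K m n r (monomial μ 1) = monomial ν 1 := by
  classical
  rw [monomial_eq_mprod]
  exact phi_mprod_monic _

lemma ker_le : ∀ (d : ℕ) (f : MvPolynomial (Fin m × Fin n × Fin r) K),
    f.support.card ≤ d → phi K m n r f = 0 → f ∈ ddIdeal K m n r := by
  classical
  intro d
  induction d with
  | zero =>
    intro f hc hf
    have h1 : f.support = ∅ := Finset.card_eq_zero.1 (Nat.le_zero.1 hc)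
    have h2 : f = 0 := support_eq_empty.1 h1
    simp [h2]
  | succ d ih =>
    intro f hc hf
    by_cases h0 : f = 0
    · simp [h0]
    have hne : f.support.Nonempty := Finset.nonempty_iff_ne_empty.2
      (fun h => h0 (support_eq_empty.1 h))
    obtain ⟨μ, hμ⟩ := hne
    set S := f.support.filter
      (fun ν => phi K m n r (monomial ν 1) = phi K m n r (monomial μ 1)) with hS
    have hμS : μ ∈ S := Finset.mem_filter.2 ⟨hμ, rfl⟩
    obtain ⟨Eμ, hEμ⟩ := phi_monomial (K := K) μ
    -- the sum of coefficients over S vanishes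
    have hsum : ∑ ν ∈ S, coeff ν f = 0 := by
      have h1 : coeff Eμ (phi K m n r f) = ∑ ν ∈ f.support, coeff ν f *
          (if phi K m n r (monomial ν 1) = phi K m n r (monomial μ 1) then 1 else 0) := by
        conv_lhs => rw [f.as_sum, map_sum]
        rw [coeff_sum]
        apply Finset.sum_congr rfl
        intro ν _
        obtain ⟨Eν, hEν⟩ := phi_monomial (K := K) ν
        have e1 : phi K m n r (monomial ν (coeff ν f)) = C (coeff ν f) * monomial Eν 1 := by
          rw [show (monomial ν) (coeff ν f) = C (coeff ν f) * monomial ν (1:K) by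
              rw [C_mul_monomial, mul_one],
            map_mul, hEν]
          congr 1
          simp [phi]
        rw [e1, coeff_C_mul, coeff_monomial]
        by_cases hcase : phi K m n r (monomial ν 1) = phi K m n r (monomial μ 1)
        · rw [if_pos hcase]
          have : Eν = Eμ := monomial_left_injective (one_ne_zero (α := K))
            (show (monomial Eν (1:K) : MvPolynomial (Fin m ⊕ Fin n ⊕ Fin r) K)
                = monomial Eμ 1 by rw [← hEν, ← hEμ, hcase])
          simp [this]
        · rw [if_neg hcase]
          have : Eν ≠ Eμ := fun h => hcase (by rw [hEν, hEμ, h])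
          simp [this]
      rw [hf] at h1
      simp only [coeff_zero, mul_ite, mul_one, mul_zero] at h1
      rw [← Finset.sum_filter] at h1
      exact h1.symm
    set g := f - ∑ ν ∈ S, C (coeff ν f) * (monomial ν 1 - monomial μ 1) with hg
    have hdiffI : ∀ ν ∈ S, (monomial ν (1:K) - monomial μ 1) ∈ ddIdeal K m n r :=
      fun ν hν => binomial_mem (Finset.mem_filter.1 hν).2
    have hsub : f - g ∈ ddIdeal K m n r := by
      have e : f - g = ∑ ν ∈ S, C (coeff ν f) * (monomial ν 1 - monomial μ 1) := by
        rw [hg]; ring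
      rw [e]
      exact Ideal.sum_mem _ (fun ν hν => Ideal.mul_mem_left _ _ (hdiffI ν hν))
    have hgker : phi K m n r g = 0 := by
      rw [hg, map_sub, hf, map_sum, zero_sub, neg_eq_zero]
      apply Finset.sum_eq_zero
      intro ν hν
      rw [map_mul, map_sub, (Finset.mem_filter.1 hν).2, sub_self, mul_zero]
    have hg2 : g = f - ∑ ν ∈ S, monomial ν (coeff ν f) := by
      rw [hg]
      congr 1
      calc ∑ ν ∈ S, C (coeff ν f) * (monomial ν 1 - monomial μ 1)
          = (∑ ν ∈ S, C (coeff ν f) * monomial ν 1)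
            - (∑ ν ∈ S, C (coeff ν f)) * monomial μ 1 := by
            rw [Finset.sum_mul, ← Finset.sum_sub_distrib]
            apply Finset.sum_congr rfl
            intro ν _; ring
        _ = ∑ ν ∈ S, monomial ν (coeff ν f) := by
            rw [← map_sum, hsum, map_zero, zero_mul, sub_zero]
            apply Finset.sum_congr rfl
            intro ν _; rw [C_mul_monomial, mul_one]
    have hgcoeff : ∀ ν, coeff ν g = if ν ∈ S then 0 else coeff ν f := by
      intro ν
      rw [hg2, coeff_sub, coeff_sum]
      have : ∑ ν' ∈ S, coeff ν (monomial ν' (coeff ν' f))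
          = if ν ∈ S then coeff ν f else 0 := by
        rw [Finset.sum_congr rfl (fun ν' _ => coeff_monomial ν ν' (coeff ν' f))]
        exact Finset.sum_ite_eq' S ν (fun ν' => coeff ν' f)
      rw [this]
      by_cases hν : ν ∈ S <;> simp [hν]
    have hgsupp : g.support ⊆ f.support \ S := by
      intro ν hν
      rw [mem_support_iff, hgcoeff ν] at hν
      by_cases h : ν ∈ S
      · simp [h] at hν
      · rw [if_neg h] at hν
        exact Finset.mem_sdiff.2 ⟨mem_support_iff.2 hν, h⟩
    have hcard : g.support.card ≤ d := by
      have h1 : (f.support \ S).card = f.support.card - S.card :=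
        Finset.card_sdiff_of_subset (Finset.filter_subset _ _)
      have h2 : 1 ≤ S.card := Finset.card_pos.2 ⟨μ, hμS⟩
      have := Finset.card_le_card hgsupp
      omega
    have hgI := ih g hcard hgker
    exact mem_of_eq (add_mem hgI hsub) (by ring)

end DD


/-- The toric map `φ` sending `X (i,j,k)` to `x_i y_j z_k`. -/

theorem stmt_4 (K : Type*) [Field K] (m n r : ℕ) (hm : 0 < m) (hn : 0 < n) (hr : 0 < r) :
    (ddIdeal K m n r).IsPrime := by
  have heq : ddIdeal K m n r = RingHom.ker (DD.phi K m n r).toRingHom := by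
    apply le_antisymm
    · rw [ddIdeal, Ideal.span_le]
      rintro f (⟨i,i',j,j',k,h1,h2,rfl⟩ | ⟨i,i',j,j',k,k',h1,h2,rfl⟩ |
        ⟨i,i',j,j',k,k',h1,h2,rfl⟩) <;>
      · simp only [SetLike.mem_coe, RingHom.mem_ker, AlgHom.toRingHom_eq_coe,
          RingHom.coe_coe, map_sub, map_mul, DD.phi_X]
        ring
    · intro f hf
      exact DD.ker_le f.support.card f le_rfl (RingHom.mem_ker.1 hf)
  rw [heq]
  exact RingHom.ker_isPrime _
end

section
/- For any permutation (m',n',r') of the triple (m,n,r), there is a K-algebra isomorphism MvPolynomial (Fin m × Fin n × Fin r) K ⧸ I(m,n,r) ≃ₐ[K] MvPolynomial (Fin m' × Fin n' × Fin r') K ⧸ I(m',n',r'). -/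
open MvPolynomial

namespace DDAux

variable {K : Type*} [Field K] {m n r : ℕ}

lemma mem1 {i i' : Fin m} {j j' : Fin n} (k : Fin r) (hi : i < i') (hj : j < j') :
    (X (i,j,k) * X (i',j',k) - X (i,j',k) * X (i',j,k) : MvPolynomial _ K) ∈ ddIdeal K m n r :=
  Ideal.subset_span (Or.inl ⟨i,i',j,j',k,hi,hj,rfl⟩)

lemma mem2 {i i' : Fin m} (j j' : Fin n) {k k' : Fin r} (hi : i < i') (hk : k < k') :
    (X (i,j,k) * X (i',j',k') - X (i,j',k') * X (i',j,k) : MvPolynomial _ K) ∈ ddIdeal K m n r :=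
  Ideal.subset_span (Or.inr (Or.inl ⟨i,i',j,j',k,k',hi,hk,rfl⟩))

lemma mem3 (i i' : Fin m) {j j' : Fin n} {k k' : Fin r} (hj : j < j') (hk : k < k') :
    (X (i,j,k) * X (i',j',k') - X (i,j',k) * X (i',j,k') : MvPolynomial _ K) ∈ ddIdeal K m n r :=
  Ideal.subset_span (Or.inr (Or.inr ⟨i,i',j,j',k,k',hj,hk,rfl⟩))

/-- swap of the last two factors -/
def eA (m n r : ℕ) : (Fin m × Fin n × Fin r) ≃ (Fin m × Fin r × Fin n) where
  toFun x := (x.1, x.2.2, x.2.1)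
  invFun x := (x.1, x.2.2, x.2.1)
  left_inv _ := rfl
  right_inv _ := rfl

/-- swap of the first two factors -/
def eB (m n r : ℕ) : (Fin m × Fin n × Fin r) ≃ (Fin n × Fin m × Fin r) where
  toFun x := (x.2.1, x.1, x.2.2)
  invFun x := (x.2.1, x.1, x.2.2)
  left_inv _ := rfl
  right_inv _ := rfl

lemma renameA_mem (f : MvPolynomial (Fin m × Fin n × Fin r) K) (hf : f ∈ ddGens K m n r) :
    rename (eA m n r) f ∈ ddIdeal K m r n := by
  obtain ⟨i,i',j,j',k,hi,hj,rfl⟩ | ⟨i,i',j,j',k,k',hi,hk,rfl⟩ | ⟨i,i',j,j',k,k',hj,hk,rfl⟩ := hf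
  · simp only [map_sub, map_mul, rename_X, eA, Equiv.coe_fn_mk]
    exact mem2 k k hi hj
  · simp only [map_sub, map_mul, rename_X, eA, Equiv.coe_fn_mk]
    rcases lt_trichotomy j j' with h | rfl | h
    · exact mem2 k k' hi h
    · exact mem1 j hi hk
    · rw [show (X (i,k,j) * X (i',k',j') - X (i,k',j') * X (i',k,j) : MvPolynomial _ K) =
          -(X (i,k',j') * X (i',k,j) - X (i,k,j) * X (i',k',j')) by ring]
      exact neg_mem (mem2 k' k hi h)
  · simp only [map_sub, map_mul, rename_X, eA, Equiv.coe_fn_mk]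
    rcases lt_trichotomy i i' with h | rfl | h
    · rw [show (X (i,k,j) * X (i',k',j') - X (i,k,j') * X (i',k',j) : MvPolynomial _ K) =
          (X (i,k,j) * X (i',k',j') - X (i,k',j) * X (i',k,j')) +
          (X (i,k',j) * X (i',k,j') - X (i,k,j') * X (i',k',j)) by ring]
      exact add_mem (mem3 i i' hk hj) (mem2 k' k h hj)
    · rw [show (X (i,k,j) * X (i,k',j') - X (i,k,j') * X (i,k',j) : MvPolynomial _ K) =
          (X (i,k,j) * X (i,k',j') - X (i,k',j) * X (i,k,j')) by ring]
      exact mem3 i i hk hj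
    · rw [show (X (i,k,j) * X (i',k',j') - X (i,k,j') * X (i',k',j) : MvPolynomial _ K) =
          (X (i,k,j) * X (i',k',j') - X (i,k',j) * X (i',k,j')) -
          (X (i',k',j) * X (i,k,j') - X (i',k,j') * X (i,k',j)) by ring]
      exact sub_mem (mem3 i i' hk hj) (mem2 k' k h hj)

lemma renameB_mem (f : MvPolynomial (Fin m × Fin n × Fin r) K) (hf : f ∈ ddGens K m n r) :
    rename (eB m n r) f ∈ ddIdeal K n m r := by
  obtain ⟨i,i',j,j',k,hi,hj,rfl⟩ | ⟨i,i',j,j',k,k',hi,hk,rfl⟩ | ⟨i,i',j,j',k,k',hj,hk,rfl⟩ := hf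
  · simp only [map_sub, map_mul, rename_X, eB, Equiv.coe_fn_mk]
    rw [show (X (j,i,k) * X (j',i',k) - X (j',i,k) * X (j,i',k) : MvPolynomial _ K) =
        (X (j,i,k) * X (j',i',k) - X (j,i',k) * X (j',i,k)) by ring]
    exact mem1 k hj hi
  · simp only [map_sub, map_mul, rename_X, eB, Equiv.coe_fn_mk]
    rw [show (X (j,i,k) * X (j',i',k') - X (j',i,k') * X (j,i',k) : MvPolynomial _ K) =
        (X (j,i,k) * X (j',i',k') - X (j,i',k) * X (j',i,k')) by ring]
    exact mem3 j j' hi hk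
  · simp only [map_sub, map_mul, rename_X, eB, Equiv.coe_fn_mk]
    rw [show (X (j,i,k) * X (j',i',k') - X (j',i,k) * X (j,i',k') : MvPolynomial _ K) =
        (X (j,i,k) * X (j',i',k') - X (j,i',k') * X (j',i,k)) by ring]
    exact mem2 i i' hj hk

lemma mapA_le : Ideal.map (rename (eA m n r)) (ddIdeal K m n r) ≤ ddIdeal K m r n := by
  rw [ddIdeal, Ideal.map_span]
  exact Ideal.span_le.2 (Set.image_subset_iff.2 fun f hf => renameA_mem f hf)

lemma mapB_le : Ideal.map (rename (eB m n r)) (ddIdeal K m n r) ≤ ddIdeal K n m r := by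
  rw [ddIdeal, Ideal.map_span]
  exact Ideal.span_le.2 (Set.image_subset_iff.2 fun f hf => renameB_mem f hf)

lemma mapA_eq : Ideal.map (rename (eA m n r)) (ddIdeal K m n r) = ddIdeal K m r n := by
  refine le_antisymm mapA_le fun g hg => ?_
  have h2 : rename (eA m r n) g ∈ ddIdeal K m n r :=
    mapA_le (Ideal.mem_map_of_mem _ hg)
  have h3 : rename (eA m n r) (rename (eA m r n) g) = g := by
    rw [rename_rename]
    have : ⇑(eA m n r) ∘ ⇑(eA m r n) = id := rfl
    rw [this, rename_id, AlgHom.id_apply]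
  exact h3 ▸ Ideal.mem_map_of_mem _ h2

lemma mapB_eq : Ideal.map (rename (eB m n r)) (ddIdeal K m n r) = ddIdeal K n m r := by
  refine le_antisymm mapB_le fun g hg => ?_
  have h2 : rename (eB n m r) g ∈ ddIdeal K m n r :=
    mapB_le (Ideal.mem_map_of_mem _ hg)
  have h3 : rename (eB m n r) (rename (eB n m r) g) = g := by
    rw [rename_rename]
    have : ⇑(eB m n r) ∘ ⇑(eB n m r) = id := rfl
    rw [this, rename_id, AlgHom.id_apply]
  exact h3 ▸ Ideal.mem_map_of_mem _ h2

noncomputable def isoA (K : Type*) [Field K] (m n r : ℕ) :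
    (MvPolynomial (Fin m × Fin n × Fin r) K ⧸ ddIdeal K m n r) ≃ₐ[K]
      (MvPolynomial (Fin m × Fin r × Fin n) K ⧸ ddIdeal K m r n) :=
  Ideal.quotientEquivAlg _ _ (renameEquiv K (eA m n r)) (by rw [← mapA_eq]; rfl)

noncomputable def isoB (K : Type*) [Field K] (m n r : ℕ) :
    (MvPolynomial (Fin m × Fin n × Fin r) K ⧸ ddIdeal K m n r) ≃ₐ[K]
      (MvPolynomial (Fin n × Fin m × Fin r) K ⧸ ddIdeal K n m r) :=
  Ideal.quotientEquivAlg _ _ (renameEquiv K (eB m n r)) (by rw [← mapB_eq]; rfl)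

lemma pair_eq {b c e f : ℕ} (h : ({b,c} : Multiset ℕ) = {e,f}) :
    (b = e ∧ c = f) ∨ (b = f ∧ c = e) := by
  have hb : b ∈ ({e,f} : Multiset ℕ) := by rw [← h]; simp
  simp only [Multiset.insert_eq_cons, Multiset.mem_cons, Multiset.mem_singleton] at hb
  simp only [Multiset.insert_eq_cons] at h
  rcases hb with rfl | rfl
  · rw [Multiset.cons_inj_right, Multiset.singleton_inj] at h
    exact Or.inl ⟨rfl, h⟩
  · rw [show (e ::ₘ {b} : Multiset ℕ) = b ::ₘ {e} from Multiset.cons_swap e b 0,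
      Multiset.cons_inj_right, Multiset.singleton_inj] at h
    exact Or.inr ⟨rfl, h⟩

lemma triple_eq {a b c d e f : ℕ} (h : ({a,b,c} : Multiset ℕ) = {d,e,f}) :
    (a = d ∧ ({b,c} : Multiset ℕ) = {e,f}) ∨ (a = e ∧ ({b,c} : Multiset ℕ) = {d,f}) ∨
      (a = f ∧ ({b,c} : Multiset ℕ) = {d,e}) := by
  have ha : a ∈ ({d,e,f} : Multiset ℕ) := by rw [← h]; simp
  simp only [Multiset.insert_eq_cons, Multiset.mem_cons, Multiset.mem_singleton] at ha
  simp only [Multiset.insert_eq_cons] at h ⊢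
  rcases ha with rfl | rfl | rfl
  · rw [Multiset.cons_inj_right] at h
    exact Or.inl ⟨rfl, h⟩
  · rw [show (d ::ₘ a ::ₘ {f} : Multiset ℕ) = a ::ₘ d ::ₘ {f} from Multiset.cons_swap d a _,
      Multiset.cons_inj_right] at h
    exact Or.inr (Or.inl ⟨rfl, h⟩)
  · rw [show (d ::ₘ e ::ₘ {a} : Multiset ℕ) = a ::ₘ d ::ₘ {e} by
        rw [show (e ::ₘ {a} : Multiset ℕ) = a ::ₘ {e} from Multiset.cons_swap e a 0]
        exact Multiset.cons_swap d a _,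
      Multiset.cons_inj_right] at h
    exact Or.inr (Or.inr ⟨rfl, h⟩)

end DDAux

open DDAux
/-- The toric map `φ` sending `X (i,j,k)` to `x_i y_j z_k`. -/
theorem stmt_5 (K : Type*) [Field K] (m n r m' n' r' : ℕ)
    (hm : 0 < m) (hn : 0 < n) (hr : 0 < r)
    (hperm : ({m', n', r'} : Multiset ℕ) = ({m, n, r} : Multiset ℕ)) :
    Nonempty ((MvPolynomial (Fin m × Fin n × Fin r) K ⧸ ddIdeal K m n r) ≃ₐ[K]
      (MvPolynomial (Fin m' × Fin n' × Fin r') K ⧸ ddIdeal K m' n' r')) := by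
  rcases triple_eq hperm with ⟨rfl, h2⟩ | ⟨rfl, h2⟩ | ⟨rfl, h2⟩ <;>
    rcases pair_eq h2 with ⟨rfl, rfl⟩ | ⟨rfl, rfl⟩
  · exact ⟨AlgEquiv.refl⟩
  · exact ⟨isoA K m' r' n'⟩
  · exact ⟨isoB K n' m' r'⟩
  · exact ⟨(isoB K r' m' n').trans (isoA K m' r' n')⟩
  · exact ⟨(isoA K n' r' m').trans (isoB K n' m' r')⟩
  · exact ⟨((isoA K r' n' m').trans (isoB K r' m' n')).trans (isoA K m' r' n')⟩
end

section
/- The minimal number of generators of I(m,n,r) is C(mnr+1, 2) − C(m+1, 2)·C(n+1, 2)·C(r+1, 2): there exists a finite subset G of R with card G = C(mnr+1,2) − C(m+1,2)·C(n+1,2)·C(r+1,2) such that Ideal.span G = I(m,n,r), and every finite subset G' of R with Ideal.span G' = I(m,n,r) satisfies card G' ≥ C(mnr+1,2) − C(m+1,2)·C(n+1,2)·C(r+1,2). (Here C(a,b) denotes the binomial coefficient.) -/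
open MvPolynomial

namespace DDaux

variable {K : Type*} [Field K] {m n r : ℕ}

lemma mem_of_eq {V : Submodule K (MvPolynomial (Fin m × Fin n × Fin r) K)}
    {a b : MvPolynomial (Fin m × Fin n × Fin r) K}
    (h : a ∈ V) (e : b = a) : b ∈ V := e ▸ h

lemma mem_gen1 (i i' : Fin m) (j j' : Fin n) (k : Fin r) (hi : i < i') (hj : j < j') :
    X (i,j,k) * X (i',j',k) - X (i,j',k) * X (i',j,k)
      ∈ Submodule.span K (ddGens K m n r) :=
  Submodule.subset_span (Or.inl ⟨i,i',j,j',k,hi,hj,rfl⟩)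

lemma mem_gen2 (i i' : Fin m) (j j' : Fin n) (k k' : Fin r) (hi : i < i') (hk : k < k') :
    X (i,j,k) * X (i',j',k') - X (i,j',k') * X (i',j,k)
      ∈ Submodule.span K (ddGens K m n r) :=
  Submodule.subset_span (Or.inr (Or.inl ⟨i,i',j,j',k,k',hi,hk,rfl⟩))

lemma mem_gen3 (i i' : Fin m) (j j' : Fin n) (k k' : Fin r) (hj : j < j') (hk : k < k') :
    X (i,j,k) * X (i',j',k') - X (i,j',k) * X (i',j,k')
      ∈ Submodule.span K (ddGens K m n r) :=
  Submodule.subset_span (Or.inr (Or.inr ⟨i,i',j,j',k,k',hj,hk,rfl⟩))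

/-- swap of `j`-coordinates is in the span. -/
lemma hWj (i i' : Fin m) (j j' : Fin n) (k k' : Fin r) :
    X (i,j,k) * X (i',j',k') - X (i,j',k) * X (i',j,k')
      ∈ Submodule.span K (ddGens K m n r) := by
  rcases eq_or_ne j j' with rfl | hj
  · exact mem_of_eq (zero_mem _) (by ring)
  rcases eq_or_ne k k' with rfl | hk
  · rcases lt_trichotomy i i' with hi | rfl | hi
    · rcases lt_trichotomy j j' with h | h | h
      · exact mem_of_eq (mem_gen1 i i' j j' k hi h) (by ring)
      · exact absurd h hj
      · exact mem_of_eq (neg_mem (mem_gen1 i i' j' j k hi h)) (by ring)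
    · exact mem_of_eq (zero_mem _) (by ring)
    · rcases lt_trichotomy j j' with h | h | h
      · exact mem_of_eq (neg_mem (mem_gen1 i' i j j' k hi h)) (by ring)
      · exact absurd h hj
      · exact mem_of_eq (mem_gen1 i' i j' j k hi h) (by ring)
  · rcases lt_trichotomy k k' with h | h | h
    · rcases lt_trichotomy j j' with h2 | h2 | h2
      · exact mem_of_eq (mem_gen3 i i' j j' k k' h2 h) (by ring)
      · exact absurd h2 hj
      · exact mem_of_eq (neg_mem (mem_gen3 i i' j' j k k' h2 h)) (by ring)
    · exact absurd h hk
    · rcases lt_trichotomy j j' with h2 | h2 | h2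
      · exact mem_of_eq (neg_mem (mem_gen3 i' i j j' k' k h2 h)) (by ring)
      · exact absurd h2 hj
      · exact mem_of_eq (mem_gen3 i' i j' j k' k h2 h) (by ring)

/-- swap of both `j` and `k` coordinates is in the span. -/
lemma hWb (i i' : Fin m) (j j' : Fin n) (k k' : Fin r) :
    X (i,j,k) * X (i',j',k') - X (i,j',k') * X (i',j,k)
      ∈ Submodule.span K (ddGens K m n r) := by
  rcases eq_or_ne i i' with rfl | hi
  · exact mem_of_eq (zero_mem _) (by ring)
  rcases eq_or_ne k k' with rfl | hk
  · exact mem_of_eq (hWj i i' j j' k k) (by ring)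
  · rcases lt_trichotomy i i' with h | h | h
    · rcases lt_trichotomy k k' with h2 | h2 | h2
      · exact mem_of_eq (mem_gen2 i i' j j' k k' h h2) (by ring)
      · exact absurd h2 hk
      · exact mem_of_eq (neg_mem (mem_gen2 i i' j' j k' k h h2)) (by ring)
    · exact absurd h hi
    · rcases lt_trichotomy k k' with h2 | h2 | h2
      · exact mem_of_eq (neg_mem (mem_gen2 i' i j j' k k' h h2)) (by ring)
      · exact absurd h2 hk
      · exact mem_of_eq (mem_gen2 i' i j' j k' k h h2) (by ring)

/-- swap of `k`-coordinates is in the span. -/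
lemma hWk (i i' : Fin m) (j j' : Fin n) (k k' : Fin r) :
    X (i,j,k) * X (i',j',k') - X (i,j,k') * X (i',j',k)
      ∈ Submodule.span K (ddGens K m n r) := by
  have h1 := hWb i i' j j' k k' (K := K)
  have h2 := hWj i i' j' j k' k (K := K)
  exact mem_of_eq (add_mem h1 h2) (by ring)


variable (K m n r) in
/-- the multidegree map on unordered pairs of variables -/
def ddt (s : Sym2 (Fin m × Fin n × Fin r)) :
    Sym2 (Fin m) × Sym2 (Fin n) × Sym2 (Fin r) :=
  (s.map (·.1), s.map (·.2.1), s.map (·.2.2))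

variable (K) in
/-- the quadratic monomial attached to an unordered pair of variables -/
noncomputable def ddmon (s : Sym2 (Fin m × Fin n × Fin r)) :
    MvPolynomial (Fin m × Fin n × Fin r) K :=
  Sym2.lift ⟨fun a b => X a * X b, fun a b => mul_comm _ _⟩ s

@[simp] lemma ddmon_mk (x y : Fin m × Fin n × Fin r) :
    ddmon K s(x, y) = X x * X y := rfl

lemma ddmon_sub_mem {s s' : Sym2 (Fin m × Fin n × Fin r)}
    (h : ddt m n r s = ddt m n r s') :
    ddmon K s - ddmon K s' ∈ Submodule.span K (ddGens K m n r) := by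
  induction s, s' using Sym2.inductionOn₂ with
  | hf x x' y y' =>
  obtain ⟨i, j, k⟩ := x
  obtain ⟨i', j', k'⟩ := x'
  simp only [ddt, Sym2.map_pair_eq, Prod.mk.injEq] at h
  obtain ⟨h1, h2, h3⟩ := h
  rw [Sym2.eq_iff] at h1 h2 h3
  obtain ⟨a, b, c⟩ := y
  obtain ⟨a', b', c'⟩ := y'
  simp only at h1 h2 h3
  rcases h1 with ⟨rfl, rfl⟩ | ⟨rfl, rfl⟩ <;>
    rcases h2 with ⟨rfl, rfl⟩ | ⟨rfl, rfl⟩ <;>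
      rcases h3 with ⟨rfl, rfl⟩ | ⟨rfl, rfl⟩ <;>
        simp only [ddmon_mk]
  case _ => exact mem_of_eq (zero_mem _) (by ring)
  case _ => exact mem_of_eq (hWk i i' j j' k k') (by ring)
  case _ => exact mem_of_eq (hWj i i' j j' k k') (by ring)
  case _ => exact mem_of_eq (hWb i i' j j' k k') (by ring)
  case _ => exact mem_of_eq (hWb i i' j j' k k') (by ring)
  case _ => exact mem_of_eq (hWj i i' j j' k k') (by ring)
  case _ => exact mem_of_eq (hWk i i' j j' k k') (by ring)
  case _ => exact mem_of_eq (zero_mem _) (by ring)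


/-- exponent vector of an unordered pair of variables -/
noncomputable def toExp (s : Sym2 (Fin m × Fin n × Fin r)) : (Fin m × Fin n × Fin r) →₀ ℕ :=
  Sym2.lift ⟨fun a b => Finsupp.single a 1 + Finsupp.single b 1,
    fun a b => add_comm _ _⟩ s

lemma toExp_injective : Function.Injective (toExp (m := m) (n := n) (r := r)) := by
  intro s s' h
  induction s, s' using Sym2.inductionOn₂ with
  | hf x x' y y' =>
    simp only [toExp, Sym2.lift_mk] at h
    rw [Finsupp.single_add_single_eq_single_add_single one_ne_zero one_ne_zero] at h
    rcases h with ⟨rfl, rfl⟩ | ⟨-, rfl, rfl⟩ | ⟨h, -, -⟩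
    · rfl
    · exact Sym2.eq_swap
    · simp at h

lemma ddmon_eq (s : Sym2 (Fin m × Fin n × Fin r)) :
    ddmon K s = monomial (toExp s) 1 := by
  induction s using Sym2.inductionOn with
  | hf x y =>
    simp only [ddmon_mk, toExp, Sym2.lift_mk, X, monomial_mul, one_mul]

lemma linearIndependent_ddmon :
    LinearIndependent K (ddmon K (m := m) (n := n) (r := r)) := by
  have : ddmon K (m := m) (n := n) (r := r) =
      (fun u => monomial u (1 : K)) ∘ toExp := by
    funext s; exact ddmon_eq s
  rw [this]
  have hb := (basisMonomials (Fin m × Fin n × Fin r) K).linearIndependent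
  rw [coe_basisMonomials] at hb
  exact hb.comp toExp toExp_injective

lemma ddt_surjective :
    Function.Surjective (ddt m n r) := by
  rintro ⟨p, q, w⟩
  induction p using Sym2.inductionOn with
  | hf i i' =>
  induction q using Sym2.inductionOn with
  | hf j j' =>
  induction w using Sym2.inductionOn with
  | hf k k' =>
  exact ⟨s((i,j,k), (i',j',k')), by simp [ddt, Sym2.map_pair_eq]⟩

variable (K m n r) in
noncomputable def psiMap : (Sym2 (Fin m × Fin n × Fin r) →₀ K) →ₗ[K]
    MvPolynomial (Fin m × Fin n × Fin r) K :=
  Finsupp.linearCombination K (ddmon K)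

variable (K m n r) in
noncomputable def lamMap : (Sym2 (Fin m × Fin n × Fin r) →₀ K) →ₗ[K]
    (Sym2 (Fin m) × Sym2 (Fin n) × Sym2 (Fin r)) →₀ K :=
  Finsupp.lmapDomain K K (ddt m n r)

lemma mem_map_of_ddt_eq {s s' : Sym2 (Fin m × Fin n × Fin r)}
    (h : ddt m n r s = ddt m n r s') :
    ddmon K s - ddmon K s' ∈
      Submodule.map (psiMap K m n r) (LinearMap.ker (lamMap K m n r)) := by
  refine ⟨Finsupp.single s 1 - Finsupp.single s' 1, ?_, ?_⟩
  · rw [SetLike.mem_coe, LinearMap.mem_ker, map_sub]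
    simp only [lamMap, Finsupp.lmapDomain_apply, Finsupp.mapDomain_single, h, sub_self]
  · simp only [psiMap, map_sub, Finsupp.linearCombination_single, one_smul]

lemma span_eq_map :
    Submodule.span K (ddGens K m n r) =
      Submodule.map (psiMap K m n r) (LinearMap.ker (lamMap K m n r)) := by
  apply le_antisymm
  · rw [Submodule.span_le]
    rintro g (⟨i,i',j,j',k,hi,hj,rfl⟩ | ⟨i,i',j,j',k,k',hi,hk,rfl⟩ |
      ⟨i,i',j,j',k,k',hj,hk,rfl⟩)
    · exact mem_map_of_ddt_eq (s := s((i,j,k),(i',j',k))) (s' := s((i,j',k),(i',j,k)))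
        (by simp only [ddt, Sym2.map_pair_eq]
            exact congrArg₂ Prod.mk rfl (congrArg₂ Prod.mk Sym2.eq_swap rfl))
    · exact mem_map_of_ddt_eq (s := s((i,j,k),(i',j',k'))) (s' := s((i,j',k'),(i',j,k)))
        (by simp only [ddt, Sym2.map_pair_eq]
            exact congrArg₂ Prod.mk rfl (congrArg₂ Prod.mk Sym2.eq_swap Sym2.eq_swap))
    · exact mem_map_of_ddt_eq (s := s((i,j,k),(i',j',k'))) (s' := s((i,j',k),(i',j,k')))
        (by simp only [ddt, Sym2.map_pair_eq]
            exact congrArg₂ Prod.mk rfl (congrArg₂ Prod.mk Sym2.eq_swap rfl))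
  · rintro f ⟨w, hw, rfl⟩
    rw [SetLike.mem_coe, LinearMap.mem_ker] at hw
    set ρ := Function.surjInv (ddt_surjective (m := m) (n := n) (r := r)) with hρdef
    have hρ : ∀ b, ddt m n r (ρ b) = b := Function.surjInv_eq _
    have h0 : Finsupp.linearCombination K (ddmon K)
        (Finsupp.mapDomain (ρ ∘ ddt m n r) w) = 0 := by
      rw [Finsupp.mapDomain_comp]
      have : Finsupp.mapDomain (ddt m n r) w = 0 := hw
      rw [this, Finsupp.mapDomain_zero, map_zero]
    have key : psiMap K m n r w =
        ∑ s ∈ w.support, w s • (ddmon K s - ddmon K (ρ (ddt m n r s))) := by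
      have h1 : psiMap K m n r w = ∑ s ∈ w.support, w s • ddmon K s := by
        rw [psiMap, Finsupp.linearCombination_apply, Finsupp.sum]
      have h2 : (0 : MvPolynomial (Fin m × Fin n × Fin r) K)
          = ∑ s ∈ w.support, w s • ddmon K (ρ (ddt m n r s)) := by
        rw [← h0, Finsupp.linearCombination_mapDomain, Finsupp.linearCombination_apply,
          Finsupp.sum]
        rfl
      calc psiMap K m n r w = psiMap K m n r w - 0 := by ring
        _ = ∑ s ∈ w.support, w s • (ddmon K s - ddmon K (ρ (ddt m n r s))) := by
            rw [h1, h2, ← Finset.sum_sub_distrib]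
            simp [smul_sub]
    rw [key]
    refine Submodule.sum_mem _ fun s _ => Submodule.smul_mem _ _ ?_
    exact ddmon_sub_mem (hρ (ddt m n r s)).symm


lemma lamMap_surjective : Function.Surjective (lamMap K m n r) := by
  intro v
  refine ⟨Finsupp.mapDomain (Function.surjInv (ddt_surjective (m := m) (n := n) (r := r))) v, ?_⟩
  simp only [lamMap, Finsupp.lmapDomain_apply]
  rw [← Finsupp.mapDomain_comp,
    show (ddt m n r) ∘ (Function.surjInv (ddt_surjective (m := m) (n := n) (r := r))) = id from
      funext (Function.surjInv_eq _), Finsupp.mapDomain_id]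

lemma finrank_aux :
    (m+1).choose 2 * (n+1).choose 2 * (r+1).choose 2
      + Module.finrank K (Submodule.span K (ddGens K m n r)) = (m*n*r+1).choose 2 := by
  have hinj : Function.Injective (psiMap K m n r) :=
    linearIndependent_ddmon (K := K) (m := m) (n := n) (r := r)
  have e1 : Module.finrank K (Submodule.span K (ddGens K m n r))
      = Module.finrank K (LinearMap.ker (lamMap K m n r)) := by
    rw [span_eq_map]
    exact ((Submodule.equivMapOfInjective _ hinj _).finrank_eq).symm
  have e2 := LinearMap.finrank_range_add_finrank_ker (lamMap K m n r)
  rw [LinearMap.range_eq_top.2 lamMap_surjective, finrank_top] at e2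
  have cB : Module.finrank K ((Sym2 (Fin m) × Sym2 (Fin n) × Sym2 (Fin r)) →₀ K)
      = (m+1).choose 2 * (n+1).choose 2 * (r+1).choose 2 := by
    rw [Module.finrank_finsupp_self]
    simp [Fintype.card_prod, Sym2.card, Fintype.card_fin, Nat.mul_assoc]
  have cE : Module.finrank K (Sym2 (Fin m × Fin n × Fin r) →₀ K) = (m*n*r+1).choose 2 := by
    rw [Module.finrank_finsupp_self]
    simp [Sym2.card, Fintype.card_prod, Fintype.card_fin, Nat.mul_assoc]
  rw [cB, cE, ← e1] at e2
  exact e2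


lemma degree_add' (a b : (Fin m × Fin n × Fin r) →₀ ℕ) :
    (a + b).degree = a.degree + b.degree := by
  simp [Finsupp.degree_eq_weight_one, map_add]

lemma degree_single' (a : Fin m × Fin n × Fin r) :
    (Finsupp.single a 1).degree = 1 := by
  rw [Finsupp.degree_single]

lemma coeff_X_mul_X (a b : Fin m × Fin n × Fin r) (u : (Fin m × Fin n × Fin r) →₀ ℕ) :
    coeff u (X a * X b : MvPolynomial (Fin m × Fin n × Fin r) K)
      = if Finsupp.single a 1 + Finsupp.single b 1 = u then 1 else 0 := by
  rw [X, X, monomial_mul, one_mul, coeff_monomial]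

/-- a polynomial with no monomials of degree `≤ 1` -/
def IsLow (f : MvPolynomial (Fin m × Fin n × Fin r) K) : Prop :=
  ∀ u : (Fin m × Fin n × Fin r) →₀ ℕ, u.degree ≤ 1 → coeff u f = 0

lemma isLow_X_mul_X (a b : Fin m × Fin n × Fin r) :
    IsLow (X a * X b : MvPolynomial (Fin m × Fin n × Fin r) K) := by
  intro u hu
  rw [coeff_X_mul_X]
  split_ifs with h
  · exfalso
    rw [← h, degree_add', degree_single', degree_single'] at hu
    omega
  · rfl

lemma IsLow.sub {f g : MvPolynomial (Fin m × Fin n × Fin r) K}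
    (hf : IsLow f) (hg : IsLow g) : IsLow (f - g) := fun u hu => by
  rw [coeff_sub, hf u hu, hg u hu, sub_zero]

lemma coeff_ne2_X_mul_X (a b : Fin m × Fin n × Fin r)
    (u : (Fin m × Fin n × Fin r) →₀ ℕ) (hu : u.degree ≠ 2) :
    coeff u (X a * X b : MvPolynomial (Fin m × Fin n × Fin r) K) = 0 := by
  rw [coeff_X_mul_X]
  split_ifs with h
  · exfalso
    rw [← h, degree_add', degree_single', degree_single'] at hu
    omega
  · rfl

lemma isLow_gens : ∀ g ∈ ddGens K m n r, IsLow g := by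
  rintro g (⟨i,i',j,j',k,_,_,rfl⟩ | ⟨i,i',j,j',k,k',_,_,rfl⟩ | ⟨i,i',j,j',k,k',_,_,rfl⟩) <;>
    exact (isLow_X_mul_X _ _).sub (isLow_X_mul_X _ _)

lemma gens_coeff_ne2 : ∀ g ∈ ddGens K m n r, ∀ u : (Fin m × Fin n × Fin r) →₀ ℕ,
    u.degree ≠ 2 → coeff u g = 0 := by
  rintro g (⟨i,i',j,j',k,_,_,rfl⟩ | ⟨i,i',j,j',k,k',_,_,rfl⟩ | ⟨i,i',j,j',k,k',_,_,rfl⟩) <;>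
    · intro u hu
      rw [coeff_sub, coeff_ne2_X_mul_X _ _ _ hu, coeff_ne2_X_mul_X _ _ _ hu, sub_zero]

lemma coeff_mul_low {p g : MvPolynomial (Fin m × Fin n × Fin r) K} (hg : IsLow g)
    {u : (Fin m × Fin n × Fin r) →₀ ℕ} (hu : u.degree ≤ 2) :
    coeff u (p * g) = constantCoeff p * coeff u g := by
  classical
  rw [coeff_mul, Finset.sum_eq_single ((0 : (Fin m × Fin n × Fin r) →₀ ℕ), u)]
  · rw [constantCoeff_eq]
  · rintro ⟨a, c⟩ hmem hne
    rw [Finset.HasAntidiagonal.mem_antidiagonal] at hmem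
    simp only at hmem hne ⊢
    have ha : a ≠ 0 := by
      rintro rfl
      rw [zero_add] at hmem
      exact hne (by rw [hmem])
    have h1 : 1 ≤ a.degree := Nat.one_le_iff_ne_zero.2 fun h =>
      ha ((Finsupp.degree_eq_zero_iff a).1 h)
    have h2 : a.degree + c.degree = u.degree := by rw [← degree_add', hmem]
    have : c.degree ≤ 1 := by omega
    rw [hg c this, mul_zero]
  · intro h
    exact absurd (by rw [Finset.HasAntidiagonal.mem_antidiagonal, zero_add]) h

lemma IsLow.mul {p g : MvPolynomial (Fin m × Fin n × Fin r) K} (hg : IsLow g) :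
    IsLow (p * g) := fun u hu => by
  rw [coeff_mul_low hg (le_trans hu (by norm_num)), hg u hu, mul_zero]

lemma isLow_of_mem_span {S : Set (MvPolynomial (Fin m × Fin n × Fin r) K)}
    (hS : ∀ g ∈ S, IsLow g) {f : MvPolynomial (Fin m × Fin n × Fin r) K}
    (hf : f ∈ Ideal.span S) : IsLow f := by
  refine Submodule.span_induction (p := fun f _ => IsLow f) (fun g hg => hS g hg) ?_ ?_ ?_ hf
  · intro u hu; rw [coeff_zero]
  · intro x y _ _ hx hy u hu
    rw [coeff_add, hx u hu, hy u hu, add_zero]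
  · intro a x _ hx
    rw [smul_eq_mul]
    exact hx.mul

lemma hc2_fix {g : MvPolynomial (Fin m × Fin n × Fin r) K}
    (h2 : ∀ u : (Fin m × Fin n × Fin r) →₀ ℕ, u.degree ≠ 2 → coeff u g = 0) :
    homogeneousComponent 2 g = g := by
  apply MvPolynomial.ext
  intro u
  rw [coeff_homogeneousComponent]
  split_ifs with h
  · rfl
  · rw [h2 u h]

lemma hc2_fix_of_mem_spanK {v : MvPolynomial (Fin m × Fin n × Fin r) K}
    (hv : v ∈ Submodule.span K (ddGens K m n r)) :
    homogeneousComponent 2 v = v := by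
  refine Submodule.span_induction (p := fun v _ => homogeneousComponent 2 v = v)
    (fun g hg => hc2_fix (gens_coeff_ne2 g hg)) (map_zero _) ?_ ?_ hv
  · intro x y _ _ hx hy
    rw [map_add, hx, hy]
  · intro a x _ hx
    rw [map_smul, hx]

lemma hc2_mul_low {p g : MvPolynomial (Fin m × Fin n × Fin r) K} (hg : IsLow g) :
    homogeneousComponent 2 (p * g) =
      constantCoeff p • homogeneousComponent 2 g := by
  apply MvPolynomial.ext
  intro u
  rw [coeff_homogeneousComponent, MvPolynomial.coeff_smul, coeff_homogeneousComponent]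
  split_ifs with h
  · rw [coeff_mul_low hg (le_of_eq h), smul_eq_mul]
  · rw [smul_zero]

lemma hc2_span_mem {S : Set (MvPolynomial (Fin m × Fin n × Fin r) K)}
    (hS : ∀ g ∈ S, IsLow g) {f : MvPolynomial (Fin m × Fin n × Fin r) K}
    (hf : f ∈ Ideal.span S) :
    homogeneousComponent 2 f
      ∈ Submodule.span K ((fun g => homogeneousComponent 2 g) '' S) := by
  refine Submodule.span_induction
    (p := fun f _ => homogeneousComponent 2 f
      ∈ Submodule.span K ((fun g => homogeneousComponent 2 g) '' S)) ?_ ?_ ?_ ?_ hf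
  · intro g hg
    exact Submodule.subset_span ⟨g, hg, rfl⟩
  · simp only [map_zero]; exact zero_mem _
  · intro x y _ _ hx hy
    simp only [map_add]; exact add_mem hx hy
  · intro a x hxmem hx
    rw [smul_eq_mul, hc2_mul_low (isLow_of_mem_span hS hxmem)]
    exact Submodule.smul_mem _ _ hx

lemma mem_ideal_of_mem_spanK {S : Set (MvPolynomial (Fin m × Fin n × Fin r) K)}
    {v : MvPolynomial (Fin m × Fin n × Fin r) K}
    (hv : v ∈ Submodule.span K S) : v ∈ Ideal.span S := by
  refine Submodule.span_induction (p := fun v _ => v ∈ Ideal.span S)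
    (fun g hg => Ideal.subset_span hg) (zero_mem _) (fun x y _ _ hx hy => add_mem hx hy)
    ?_ hv
  intro a x _ hx
  rw [MvPolynomial.smul_eq_C_mul]
  exact Ideal.mul_mem_left _ _ hx

lemma ddGens_finite : (ddGens K m n r).Finite := by
  classical
  apply Set.Finite.subset (Set.finite_range
    (fun q : (Fin m × Fin n × Fin r) × (Fin m × Fin n × Fin r) ×
        (Fin m × Fin n × Fin r) × (Fin m × Fin n × Fin r) =>
      X q.1 * X q.2.1 - X q.2.2.1 * X q.2.2.2 : _ → MvPolynomial (Fin m × Fin n × Fin r) K))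
  rintro g (⟨i,i',j,j',k,_,_,rfl⟩ | ⟨i,i',j,j',k,k',_,_,rfl⟩ | ⟨i,i',j,j',k,k',_,_,rfl⟩)
  · exact ⟨((i,j,k),(i',j',k),(i,j',k),(i',j,k)), rfl⟩
  · exact ⟨((i,j,k),(i',j',k'),(i,j',k'),(i',j,k)), rfl⟩
  · exact ⟨((i,j,k),(i',j',k'),(i,j',k),(i',j,k')), rfl⟩

end DDaux

open DDaux in
/-- The toric map `φ` sending `X (i,j,k)` to `x_i y_j z_k`. -/
theorem stmt_7 (K : Type*) [Field K] (m n r : ℕ) (hm : 0 < m) (hn : 0 < n) (hr : 0 < r) :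
    (∃ G : Finset (MvPolynomial (Fin m × Fin n × Fin r) K),
        G.card = (m * n * r + 1).choose 2 -
          (m + 1).choose 2 * (n + 1).choose 2 * (r + 1).choose 2 ∧
        Ideal.span (G : Set (MvPolynomial (Fin m × Fin n × Fin r) K)) = ddIdeal K m n r) ∧
    ∀ G' : Finset (MvPolynomial (Fin m × Fin n × Fin r) K),
      Ideal.span (G' : Set (MvPolynomial (Fin m × Fin n × Fin r) K)) = ddIdeal K m n r →
        (m * n * r + 1).choose 2 - (m + 1).choose 2 * (n + 1).choose 2 * (r + 1).choose 2 ≤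
          G'.card := by
  classical
  have hfr := finrank_aux (K := K) (m := m) (n := n) (r := r)
  constructor
  · obtain ⟨b, hbsub, hbspan, hbli⟩ := exists_linearIndependent K (ddGens K m n r)
    have hbfin : b.Finite := ddGens_finite.subset hbsub
    haveI := hbfin.fintype
    refine ⟨b.toFinset, ?_, ?_⟩
    · have hcard := finrank_span_set_eq_card (s := b) hbli
      rw [hbspan] at hcard
      omega
    · apply le_antisymm
      · rw [Ideal.span_le]
        intro g hg
        rw [Finset.mem_coe, Set.mem_toFinset] at hg
        exact Ideal.subset_span (hbsub hg)
      · rw [ddIdeal, Ideal.span_le]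
        intro g hg
        have h1 : g ∈ Submodule.span K b := by
          rw [hbspan]; exact Submodule.subset_span hg
        have h2 : g ∈ Ideal.span b := mem_ideal_of_mem_spanK h1
        have h3 : Ideal.span b ≤ Ideal.span ((b.toFinset : Finset _) : Set _) :=
          Ideal.span_mono (by simp)
        exact h3 h2
  · intro G' hG'
    have hlow : ∀ g ∈ (G' : Set (MvPolynomial (Fin m × Fin n × Fin r) K)), IsLow g := by
      intro g hg
      have hgI : g ∈ ddIdeal K m n r := by rw [← hG']; exact Ideal.subset_span hg
      exact isLow_of_mem_span isLow_gens hgI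
    have hVle : Submodule.span K (ddGens K m n r)
        ≤ Submodule.span K ((fun g => homogeneousComponent 2 g) ''
            (G' : Set (MvPolynomial (Fin m × Fin n × Fin r) K))) := by
      intro v hv
      have hvI : v ∈ Ideal.span (G' : Set (MvPolynomial (Fin m × Fin n × Fin r) K)) := by
        rw [hG']; exact mem_ideal_of_mem_spanK hv
      have hmem := hc2_span_mem hlow hvI
      rwa [hc2_fix_of_mem_spanK hv] at hmem
    rw [← Finset.coe_image] at hVle
    haveI : Module.Finite K
        (Submodule.span K ((G'.image fun g => homogeneousComponent 2 g : Finset _) :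
          Set (MvPolynomial (Fin m × Fin n × Fin r) K))) :=
      FiniteDimensional.span_finset K _
    have h1 := Submodule.finrank_mono hVle
    have h2 := finrank_span_finset_le_card (R := K)
      (G'.image fun g => homogeneousComponent 2 g)
    rw [Set.finrank] at h2
    have h3 : (G'.image fun g => homogeneousComponent 2 g).card ≤ G'.card :=
      Finset.card_image_le
    omega
end
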